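/- arXiv:nlin/0209005 — 6 statements merged into one kernel-verified Lean document; each statement's English description precedes it below -/
import Mathlib

section
/- Uniform blocks of size k+1 do not shrink during time evolution: for every k ≥ 1, every sign ε ∈ {−1, 1}, every configuration s : ℤ → {−1, 1}, and every integer a, if s(j) = ε for all j with a ≤ j ≤ a + k, then for every time t ≥ 0 the evolved configuration satisfies T^t(s)(j) = ε for all j with a ≤ j ≤ a + k. -/
/-- The sum of site values over the neighborhood `[i-k, i+k]`. -/
noncomputable def nbhdSum (k : ℕ) (s : ℤ → ℤ) (i : ℤ) : ℤ :=
  ∑ α ∈ Finset.Icc (-(k : ℤ)) (k : ℤ), s (i + α)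

/-- One step of the majority-rule cellular automaton with `2k` neighbors. -/
noncomputable def update (k : ℕ) (s : ℤ → ℤ) : ℤ → ℤ :=
  fun i =>
    if 0 < nbhdSum k s i then 1
    else if nbhdSum k s i < 0 then -1
    else s i

lemma key_sum (k : ℕ) (hk : 1 ≤ k) (ε : ℤ) (hε : ε = 1 ∨ ε = -1)
    (s : ℤ → ℤ) (hs : ∀ i, s i = 1 ∨ s i = -1) (a : ℤ)
    (hblock : ∀ j : ℤ, a ≤ j → j ≤ a + k → s j = ε)
    (j : ℤ) (h1 : a ≤ j) (h2 : j ≤ a + k) : 0 < ε * nbhdSum k s j := by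
  set B := Finset.Icc (a - j) (a + k - j) with hBdef
  have hB : B ⊆ Finset.Icc (-(k : ℤ)) (k : ℤ) := by
    intro x hx
    simp only [hBdef, Finset.mem_Icc] at *
    omega
  have hεsq : ε * ε = 1 := by rcases hε with h | h <;> simp [h]
  have hlow : ∀ α ∈ Finset.Icc (-(k : ℤ)) (k : ℤ),
      (if α ∈ B then (1 : ℤ) else -1) ≤ ε * s (j + α) := by
    intro α hα
    by_cases hmem : α ∈ B
    · simp only [hmem, if_pos]
      have : s (j + α) = ε := by
        apply hblock
        · simp only [hBdef, Finset.mem_Icc] at hmem; omega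
        · simp only [hBdef, Finset.mem_Icc] at hmem; omega
      rw [this, hεsq]
    · simp only [hmem, if_neg, not_false_iff]
      rcases hε with h | h <;> rcases hs (j + α) with h' | h' <;> simp [h, h']
  have hsum : (1 : ℤ) ≤ ∑ α ∈ Finset.Icc (-(k : ℤ)) (k : ℤ),
      (if α ∈ B then (1 : ℤ) else -1) := by
    rw [← Finset.sum_sdiff hB]
    have h1 : ∑ α ∈ B, (if α ∈ B then (1 : ℤ) else -1) = B.card := by
      rw [Finset.sum_congr rfl (fun x hx => if_pos hx)]
      simp
    have h2 : ∑ α ∈ Finset.Icc (-(k : ℤ)) (k : ℤ) \ B,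
        (if α ∈ B then (1 : ℤ) else -1) = -((Finset.Icc (-(k : ℤ)) (k : ℤ) \ B).card) := by
      rw [Finset.sum_congr rfl (fun x hx => if_neg (Finset.mem_sdiff.mp hx).2)]
      simp
    rw [h1, h2, Finset.card_sdiff_of_subset hB]
    have hcB : B.card = k + 1 := by
      simp only [hBdef, Int.card_Icc]
      omega
    have hcI : (Finset.Icc (-(k : ℤ)) (k : ℤ)).card = 2 * k + 1 := by
      simp only [Int.card_Icc]
      omega
    rw [hcB, hcI]
    push_cast
    omega
  calc (0 : ℤ) < 1 := one_pos
    _ ≤ ∑ α ∈ Finset.Icc (-(k : ℤ)) (k : ℤ), (if α ∈ B then (1 : ℤ) else -1) := hsum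
    _ ≤ ∑ α ∈ Finset.Icc (-(k : ℤ)) (k : ℤ), ε * s (j + α) :=
        Finset.sum_le_sum hlow
    _ = ε * nbhdSum k s j := by rw [nbhdSum, Finset.mul_sum]

/-- Uniform blocks of size `k+1` do not shrink during time evolution. -/
theorem uniform_block_persists (k : ℕ) (hk : 1 ≤ k) (ε : ℤ) (hε : ε = 1 ∨ ε = -1)
    (s : ℤ → ℤ) (hs : ∀ i, s i = 1 ∨ s i = -1) (a : ℤ)
    (hblock : ∀ j : ℤ, a ≤ j → j ≤ a + k → s j = ε) :
    ∀ t : ℕ, ∀ j : ℤ, a ≤ j → j ≤ a + k → (update k)^[t] s j = ε := by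
  intro t
  induction t generalizing s with
  | zero => intro j h1 h2; simpa using hblock j h1 h2
  | succ n ih =>
    intro j h1 h2
    rw [Function.iterate_succ_apply]
    apply ih
    · intro i
      unfold update
      split_ifs with h h'
      · left; rfl
      · right; rfl
      · exact hs i
    · intro j' h1' h2'
      have hkey := key_sum k hk ε hε s hs a hblock j' h1' h2'
      unfold update
      rcases hε with h | h
      · rw [h] at hkey; simp only [one_mul] at hkey
        rw [if_pos hkey, h]
      · rw [h] at hkey
        have : nbhdSum k s j' < 0 := by omega
        rw [if_neg (by omega), if_pos this, h]
    · exact h1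
    · exact h2
end

section
/- A uniform block of size k+1 absorbs an adjacent boundary site of a non-uniform region: for every k ≥ 1, every sign ε ∈ {−1, 1}, and every configuration s : ℤ → {−1, 1}, if s(j) = ε for all j with a ≤ j ≤ a + k, and it is not the case that s(j) = −ε for all j with a + k + 1 ≤ j ≤ a + 2k + 1 (i.e. the k+1 sites to the right of the block do not all carry the opposite sign), then T(s)(a + k + 1) = ε, so after one step the uniform block of value ε extends at least to the interval [a, a+k+1]. -/
/-- If at least `k+1` of the `2k+1` sites in the neighborhood of `i` carry
the value `ε`, then the majority update at `i` yields `ε`. -/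
lemma update_eq_of_majority (k : ℕ) (ε : ℤ) (hε : ε = 1 ∨ ε = -1)
    (s : ℤ → ℤ) (hs : ∀ i, s i = 1 ∨ s i = -1) (i : ℤ) (T : Finset ℤ)
    (hT : T ⊆ Finset.Icc (i - k) (i + k)) (hcard : k + 1 ≤ T.card)
    (hTε : ∀ j ∈ T, s j = ε) :
    update k s i = ε := by
  simp only [update, nbhdSum]
  have hsum : ∑ α ∈ Finset.Icc (-(k : ℤ)) (k : ℤ), s (i + α)
      = ∑ j ∈ Finset.Icc (i - k) (i + k), s j := by
    rw [show Finset.Icc (i - (k:ℤ)) (i + k)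
        = Finset.map ⟨(i + ·), add_right_injective i⟩ (Finset.Icc (-(k:ℤ)) k) from ?_]
    · simp only [Finset.sum_map, Function.Embedding.coeFn_mk]
    · ext x
      simp only [Finset.mem_map, Finset.mem_Icc, Function.Embedding.coeFn_mk]
      constructor
      · intro h; exact ⟨x - i, by omega, by omega⟩
      · rintro ⟨y, hy, rfl⟩; omega
  set F := Finset.Icc (i - (k:ℤ)) (i + k) with hF
  have hFcard : F.card = 2 * k + 1 := by
    rw [hF, Int.card_Icc]; omega
  have hTcard : T.card ≤ F.card := Finset.card_le_card hT
  have hsd : (F \ T).card = F.card - T.card := Finset.card_sdiff_of_subset hT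
  have hsplit : ∑ j ∈ F, s j = ∑ j ∈ F \ T, s j + ∑ j ∈ T, s j :=
    (Finset.sum_sdiff hT).symm
  have hTsum : ∑ j ∈ T, s j = T.card * ε := by
    rw [Finset.sum_congr rfl hTε, Finset.sum_const, nsmul_eq_mul]
  have hub : ∑ j ∈ F \ T, s j ≤ ((F \ T).card : ℤ) := by
    calc ∑ j ∈ F \ T, s j ≤ ∑ _j ∈ F \ T, (1:ℤ) :=
          Finset.sum_le_sum (fun j _ => by rcases hs j with h | h <;> omega)
      _ = (F \ T).card := by simp
  have hlb : -((F \ T).card : ℤ) ≤ ∑ j ∈ F \ T, s j := by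
    calc -((F \ T).card : ℤ) = ∑ _j ∈ F \ T, (-1:ℤ) := by simp
      _ ≤ ∑ j ∈ F \ T, s j :=
          Finset.sum_le_sum (fun j _ => by rcases hs j with h | h <;> omega)
  have hsdlek : ((F \ T).card : ℤ) ≤ k := by
    push_cast [hsd, hFcard]; omega
  have hTk : (k:ℤ) + 1 ≤ (T.card : ℤ) := by exact_mod_cast hcard
  rcases hε with rfl | rfl
  · have hpos : 0 < ∑ α ∈ Finset.Icc (-(k : ℤ)) (k : ℤ), s (i + α) := by
      rw [hsum, hsplit, hTsum]; linarith
    exact if_pos hpos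
  · have hneg : ∑ α ∈ Finset.Icc (-(k : ℤ)) (k : ℤ), s (i + α) < 0 := by
      rw [hsum, hsplit, hTsum]; linarith
    exact (if_neg (show ¬ (0 < ∑ α ∈ Finset.Icc (-(k : ℤ)) (k : ℤ), s (i + α)) by omega)).trans (if_pos hneg)

/-- A uniform block of size `k+1` absorbs an adjacent boundary site of a
non-uniform region: if the `k+1` sites immediately to its right do not all
carry the opposite sign, then after one step the block extends to `[a, a+k+1]`. -/
theorem uniform_block_absorbs (k : ℕ) (hk : 1 ≤ k) (ε : ℤ) (hε : ε = 1 ∨ ε = -1)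
    (s : ℤ → ℤ) (hs : ∀ i, s i = 1 ∨ s i = -1) (a : ℤ)
    (hblock : ∀ j : ℤ, a ≤ j → j ≤ a + k → s j = ε)
    (hright : ¬ (∀ j : ℤ, a + k + 1 ≤ j → j ≤ a + 2 * k + 1 → s j = -ε)) :
    update k s (a + k + 1) = ε ∧
    ∀ j : ℤ, a ≤ j → j ≤ a + k + 1 → update k s j = ε := by
  have main : ∀ j : ℤ, a ≤ j → j ≤ a + k + 1 → update k s j = ε := by
    intro j hj1 hj2
    rcases le_or_gt j (a + k) with hle | hgt
    · apply update_eq_of_majority k ε hε s hs j (Finset.Icc a (a + k))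
      · intro x hx; simp only [Finset.mem_Icc] at hx ⊢; omega
      · rw [Int.card_Icc]; omega
      · intro x hx; simp only [Finset.mem_Icc] at hx; exact hblock x hx.1 hx.2
    · have hj : j = a + k + 1 := by omega
      subst hj
      push_neg at hright
      obtain ⟨j0, h1, h2, h3⟩ := hright
      have hj0 : s j0 = ε := by
        rcases hs j0 with h | h <;> rcases hε with rfl | rfl <;> omega
      apply update_eq_of_majority k ε hε s hs _ (insert j0 (Finset.Icc (a + 1) (a + k)))
      · intro x hx
        simp only [Finset.mem_insert, Finset.mem_Icc] at hx ⊢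
        omega
      · rw [Finset.card_insert_of_notMem (by simp only [Finset.mem_Icc]; omega),
          Int.card_Icc]
        omega
      · intro x hx
        simp only [Finset.mem_insert, Finset.mem_Icc] at hx
        rcases hx with rfl | hx
        · exact hj0
        · exact hblock x (by omega) (by omega)
  exact ⟨main _ (by omega) le_rfl, main⟩
end

section
/- Any finite non-uniform block bounded on both sides by uniform blocks of size at least k+1 is eliminated during evolution: for every k ≥ 1, signs ε₁, ε₂ ∈ {−1, 1}, integers a and b with a + k < b, and configuration s : ℤ → {−1, 1} such that s(j) = ε₁ for all j ∈ [a, a+k], s(j) = ε₂ for all j ∈ [b, b+k], and no k+1 consecutive sites contained in the open gap (a+k, b) all carry the same value, there exists a time T such that for all t ≥ T and all j ∈ [a, b+k] one has T^t(s)(j) = T^T(s)(j), and moreover every site j ∈ [a, b+k] lies in a monochromatic run of T^T(s) of length at least k+1. -/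

lemma update_pm (k : ℕ) (s : ℤ → ℤ) (hs : ∀ i, s i = 1 ∨ s i = -1) (i : ℤ) :
    update k s i = 1 ∨ update k s i = -1 := by
  unfold update
  split_ifs with h1 h2
  · left; rfl
  · right; rfl
  · exact hs i

lemma sum_pm_pos (k : ℕ) (f : ℤ → ℤ)
    (hf : ∀ α ∈ Finset.Icc (-(k:ℤ)) (k:ℤ), f α = 1 ∨ f α = -1)
    (B : Finset ℤ) (hBA : B ⊆ Finset.Icc (-(k:ℤ)) (k:ℤ)) (hcard : k + 1 ≤ B.card)
    (hB : ∀ α ∈ B, f α = 1) :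
    0 < ∑ α ∈ Finset.Icc (-(k:ℤ)) (k:ℤ), f α := by
  set A := Finset.Icc (-(k:ℤ)) (k:ℤ) with hA
  have cardA : A.card = 2 * k + 1 := by
    rw [hA, Int.card_Icc]; omega
  have hsplit : ∑ α ∈ A \ B, f α + ∑ α ∈ B, f α = ∑ α ∈ A, f α :=
    Finset.sum_sdiff hBA
  have hBsum : ∑ α ∈ B, f α = B.card := by
    rw [Finset.sum_congr rfl hB]; simp
  have hABsum : -((A \ B).card : ℤ) ≤ ∑ α ∈ A \ B, f α := by
    have : ∀ α ∈ A \ B, (-1 : ℤ) ≤ f α := by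
      intro α hα
      rcases hf α (Finset.mem_sdiff.mp hα).1 with h | h <;> omega
    calc -((A \ B).card : ℤ) = ∑ _α ∈ A \ B, (-1 : ℤ) := by simp
      _ ≤ ∑ α ∈ A \ B, f α := Finset.sum_le_sum this
  have cardAB : (A \ B).card = A.card - B.card := Finset.card_sdiff_of_subset hBA
  have hBle : B.card ≤ A.card := Finset.card_le_card hBA
  have : (0:ℤ) < -((A \ B).card : ℤ) + B.card := by
    rw [cardAB]
    push_cast [Nat.cast_sub hBle]
    omega
  omega

lemma run_stable (k : ℕ) (s : ℤ → ℤ) (hs : ∀ i, s i = 1 ∨ s i = -1)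
    (c v : ℤ) (hv : v = 1 ∨ v = -1)
    (hrun : ∀ j, c ≤ j → j ≤ c + k → s j = v)
    (j : ℤ) (hj1 : c ≤ j) (hj2 : j ≤ c + k) :
    update k s j = v := by
  have key : 0 < ∑ α ∈ Finset.Icc (-(k:ℤ)) (k:ℤ), v * s (j + α) := by
    apply sum_pm_pos k _ ?_ (Finset.Icc (c - j) (c + k - j)) ?_ ?_ ?_
    · intro α _
      rcases hs (j + α) with h | h <;> rcases hv with h' | h' <;> simp [h, h']
    · intro α hα
      simp only [Finset.mem_Icc] at *
      omega
    · rw [Int.card_Icc]; omega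
    · intro α hα
      simp only [Finset.mem_Icc] at hα
      rw [hrun (j + α) (by omega) (by omega)]
      rcases hv with h' | h' <;> simp [h']
  have key2 : 0 < v * nbhdSum k s j := by
    rw [nbhdSum, Finset.mul_sum]; exact key
  rcases hv with rfl | rfl
  · have h : 0 < nbhdSum k s j := by linarith
    simp [update, h]
  · have h : nbhdSum k s j < 0 := by linarith
    have h' : ¬ 0 < nbhdSum k s j := by linarith
    simp [update, h, h']

lemma flip_to_v (k : ℕ) (hk : 1 ≤ k) (s : ℤ → ℤ) (hs : ∀ i, s i = 1 ∨ s i = -1)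
    (j₀ v : ℤ) (hv : v = 1 ∨ v = -1)
    (hleft : ∀ j, j₀ - k ≤ j → j ≤ j₀ - 1 → s j = v)
    (j₁ : ℤ) (hj₁ : j₀ + 1 ≤ j₁) (hj₁' : j₁ ≤ j₀ + k) (hj₁v : s j₁ = v) :
    update k s j₀ = v := by
  have key : 0 < ∑ α ∈ Finset.Icc (-(k:ℤ)) (k:ℤ), v * s (j₀ + α) := by
    apply sum_pm_pos k _ ?_ (insert (j₁ - j₀) (Finset.Icc (-(k:ℤ)) (-1))) ?_ ?_ ?_
    · intro α _
      rcases hs (j₀ + α) with h | h <;> rcases hv with h' | h' <;> simp [h, h']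
    · intro α hα
      simp only [Finset.mem_insert, Finset.mem_Icc] at *
      omega
    · rw [Finset.card_insert_of_notMem (by simp only [Finset.mem_Icc]; omega),
        Int.card_Icc]
      omega
    · intro α hα
      simp only [Finset.mem_insert, Finset.mem_Icc] at hα
      rcases hα with rfl | hα
      · rw [show j₀ + (j₁ - j₀) = j₁ by ring, hj₁v]
        rcases hv with h' | h' <;> simp [h']
      · rw [hleft (j₀ + α) (by omega) (by omega)]
        rcases hv with h' | h' <;> simp [h']
  have key2 : 0 < v * nbhdSum k s j₀ := by
    rw [nbhdSum, Finset.mul_sum]; exact key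
  rcases hv with rfl | rfl
  · have h : 0 < nbhdSum k s j₀ := by linarith
    simp [update, h]
  · have h : nbhdSum k s j₀ < 0 := by linarith
    have h' : ¬ 0 < nbhdSum k s j₀ := by linarith
    simp [update, h, h']

/-- Any finite non-uniform block bounded on both sides by uniform blocks of
size at least `k+1` is eliminated during evolution: the configuration becomes
eventually constant in time on the interval `[a, b+k]`, and at that time every
site of `[a, b+k]` lies in a monochromatic run of length at least `k+1`. -/
theorem finite_nonuniform_block_eliminated (k : ℕ) (hk : 1 ≤ k)
    (ε₁ ε₂ : ℤ) (hε₁ : ε₁ = 1 ∨ ε₁ = -1) (hε₂ : ε₂ = 1 ∨ ε₂ = -1)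
    (a b : ℤ) (hab : a + k < b)
    (s : ℤ → ℤ) (hs : ∀ i, s i = 1 ∨ s i = -1)
    (hleft : ∀ j : ℤ, a ≤ j → j ≤ a + k → s j = ε₁)
    (hright : ∀ j : ℤ, b ≤ j → j ≤ b + k → s j = ε₂)
    (hgap : ∀ c : ℤ, a + k < c → c + k < b →
      ¬ (∀ j : ℤ, c ≤ j → j ≤ c + k → s j = s c)) :
    ∃ T : ℕ,
      (∀ t : ℕ, T ≤ t → ∀ j : ℤ, a ≤ j → j ≤ b + k →
        (update k)^[t] s j = (update k)^[T] s j) ∧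
      (∀ j : ℤ, a ≤ j → j ≤ b + k → ∃ c : ℤ, c ≤ j ∧ j ≤ c + k ∧
        ∀ j' : ℤ, c ≤ j' → j' ≤ c + k →
          (update k)^[T] s j' = (update k)^[T] s c) := by
  classical
  set u : ℕ → ℤ → ℤ := fun t => (update k)^[t] s with hu
  have hstep : ∀ t j, u (t + 1) j = update k (u t) j := by
    intro t j
    simp only [hu, Function.iterate_succ_apply']
  -- all values remain ±1
  have hpm : ∀ t i, u t i = 1 ∨ u t i = -1 := by
    intro t
    induction t with
    | zero => exact hs
    | succ m ih =>
      intro i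
      rw [hstep]
      exact update_pm k (u m) ih i
  -- goodness
  set Good : ℕ → ℤ → Prop := fun t j =>
    ∃ c : ℤ, c ≤ j ∧ j ≤ c + k ∧ ∀ j', c ≤ j' → j' ≤ c + k → u t j' = u t c
    with hGood
  -- constant runs persist with the same value
  have hpersistC : ∀ (t : ℕ) (c : ℤ), (∀ j' : ℤ, c ≤ j' → j' ≤ c + k → u t j' = u t c) →
      (∀ j', c ≤ j' → j' ≤ c + k → u (t + 1) j' = u t c) := by
    intro t c hcc j' h1 h2
    rw [hstep]
    exact run_stable k (u t) (hpm t) c (u t c) (hpm t c) hcc j' h1 h2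
  have hpersist : ∀ t j, Good t j → Good (t + 1) j := by
    rintro t j ⟨c, h1, h2, hcc⟩
    refine ⟨c, h1, h2, fun j' a1 a2 => ?_⟩
    rw [hpersistC t c hcc j' a1 a2, hpersistC t c hcc c le_rfl (by omega)]
  -- boundary blocks stay constant
  have hL : ∀ t j, a ≤ j → j ≤ a + k → u t j = ε₁ := by
    intro t
    induction t with
    | zero => exact hleft
    | succ m ih =>
      intro j h1 h2
      rw [hstep]
      exact run_stable k (u m) (hpm m) a ε₁ hε₁ ih j h1 h2
  have hR : ∀ t j, b ≤ j → j ≤ b + k → u t j = ε₂ := by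
    intro t
    induction t with
    | zero => exact hright
    | succ m ih =>
      intro j h1 h2
      rw [hstep]
      exact run_stable k (u m) (hpm m) b ε₂ hε₂ ih j h1 h2
  -- bad sites
  set Bad : ℕ → Finset ℤ := fun t =>
    (Finset.Icc a (b + k)).filter (fun j => ¬ Good t j) with hBad
  have hmemBad : ∀ t j, j ∈ Bad t ↔ (a ≤ j ∧ j ≤ b + k ∧ ¬ Good t j) := by
    intro t j
    simp [hBad, Finset.mem_filter, Finset.mem_Icc, and_assoc]
  -- key decrease lemma
  have hdec : ∀ t, (Bad t).Nonempty → (Bad (t + 1)).card < (Bad t).card := by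
    intro t hne
    have hsub : Bad (t + 1) ⊆ Bad t := by
      intro j hj
      rw [hmemBad] at hj ⊢
      refine ⟨hj.1, hj.2.1, fun hg => hj.2.2 (hpersist t j hg)⟩
    set j₀ := (Bad t).min' hne with hj₀def
    have hj₀mem := (Bad t).min'_mem hne
    rw [hmemBad] at hj₀mem
    obtain ⟨hj₀a, hj₀b, hj₀bad⟩ := hj₀mem
    have hgoodlt : ∀ j, a ≤ j → j < j₀ → Good t j := by
      intro j hja hjlt
      by_contra hbadj
      have : j ∈ Bad t := by
        rw [hmemBad]; exact ⟨hja, by omega, hbadj⟩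
      have := (Bad t).min'_le j this
      omega
    -- j₀ is to the right of the left block
    have hj₀ak : a + k + 1 ≤ j₀ := by
      by_contra h
      exact hj₀bad ⟨a, hj₀a, by omega,
        fun j' h1 h2 => by rw [hL t j' h1 h2, hL t a le_rfl (by omega)]⟩
    set v := u t (j₀ - 1) with hvdef
    have hv : v = 1 ∨ v = -1 := hpm t _
    -- no boundary just left of j₀
    have hnobd : ∀ i, j₀ - k ≤ i → i ≤ j₀ - 2 → u t i = u t (i + 1) := by
      intro i h1 h2
      by_contra hne'
      obtain ⟨c, hc1, hc2, hcc⟩ := hgoodlt (i + 1) (by omega) (by omega)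
      by_cases hci : c ≤ i
      · exact hne' (by rw [hcc i hci (by omega), hcc (i + 1) hc1 hc2])
      · exact hj₀bad ⟨c, by omega, by omega, hcc⟩
    -- constancy on [j₀ - k, j₀ - 1]
    have hleftrun : ∀ j, j₀ - k ≤ j → j ≤ j₀ - 1 → u t j = v := by
      have hchain : ∀ n : ℕ, (n : ℤ) ≤ (k : ℤ) - 1 → u t (j₀ - 1 - n) = v := by
        intro n
        induction n with
        | zero => intro _; simp [hvdef]
        | succ m ih =>
          intro h
          have e : j₀ - 1 - ((m : ℤ) + 1) = (j₀ - 1 - m) - 1 := by ring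
          push_cast
          rw [e]
          rw [hnobd (j₀ - 1 - (m:ℤ) - 1) (by push_cast at h ⊢; omega) (by push_cast at h ⊢; omega)]
          rw [show j₀ - 1 - (m:ℤ) - 1 + 1 = j₀ - 1 - (m:ℤ) by ring]
          exact ih (by push_cast at h ⊢; omega)
      intro j h1 h2
      have e : j = j₀ - 1 - ((j₀ - 1 - j).toNat : ℤ) := by omega
      rw [e]
      exact hchain _ (by omega)
    -- j₀ has the opposite value
    have hj₀v : u t j₀ = -v := by
      have hpmj := hpm t j₀
      by_contra h
      have : u t j₀ = v := by rcases hpmj with h' | h' <;> rcases hv with h'' | h'' <;> omega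
      refine hj₀bad ⟨j₀ - k, by omega, by omega, fun j' h1 h2 => ?_⟩
      have hc : u t (j₀ - k) = v := hleftrun _ le_rfl (by omega)
      rcases eq_or_lt_of_le h2 with he | hlt
      · rw [show j' = j₀ by omega, this, hc]
      · rw [hleftrun j' h1 (by omega), hc]
    -- there is a v-site within k to the right
    have hex : ∃ j₁, j₀ + 1 ≤ j₁ ∧ j₁ ≤ j₀ + k ∧ u t j₁ = v := by
      by_contra h
      push_neg at h
      refine hj₀bad ⟨j₀, le_rfl, by omega, fun j' h1 h2 => ?_⟩
      rcases eq_or_lt_of_le h1 with he | hlt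
      · rw [← he]
      · have hne1 := h j' (by omega) (by omega)
        have := hpm t j'
        rcases this with h' | h' <;> rcases hv with h'' | h'' <;>
          rw [h', hj₀v] <;> omega
    obtain ⟨j₁, hj₁1, hj₁2, hj₁v⟩ := hex
    -- j₀ becomes good
    have hgood1 : Good (t + 1) j₀ := by
      have hnew : ∀ j', j₀ - k ≤ j' → j' ≤ j₀ → u (t + 1) j' = v := by
        intro j' h1 h2
        rcases eq_or_lt_of_le h2 with he | hlt
        · rw [he, hstep]
          exact flip_to_v k hk (u t) (hpm t) j₀ v hv hleftrun j₁ hj₁1 hj₁2 hj₁v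
        · obtain ⟨c, hc1, hc2, hcc⟩ := hgoodlt j' (by omega) (by omega)
          have := hpersistC t c hcc j' hc1 hc2
          rw [this, ← hcc j' hc1 hc2]
          exact hleftrun j' h1 (by omega)
      refine ⟨j₀ - k, by omega, by omega, fun j' h1 h2 => ?_⟩
      rw [hnew j' h1 (by omega), hnew (j₀ - k) le_rfl (by omega)]
    have hssub : Bad (t + 1) ⊂ Bad t := by
      refine ⟨hsub, fun hss => ?_⟩
      have : j₀ ∈ Bad (t + 1) := hss ((Bad t).min'_mem hne)
      rw [hmemBad] at this
      exact this.2.2 hgood1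
    exact Finset.card_lt_card hssub
  -- descent: find a time with no bad sites
  have hdesc : ∀ n t, (Bad t).card ≤ n → ∃ T, Bad T = ∅ := by
    intro n
    induction n with
    | zero =>
      intro t h
      exact ⟨t, Finset.card_eq_zero.mp (Nat.le_antisymm h (Nat.zero_le _))⟩
    | succ m ih =>
      intro t h
      by_cases hne : (Bad t).Nonempty
      · exact ih (t + 1) (by have := hdec t hne; omega)
      · exact ⟨t, Finset.not_nonempty_iff_eq_empty.mp hne⟩
  obtain ⟨T, hT⟩ := hdesc (Bad 0).card 0 le_rfl
  have hgoodT : ∀ j, a ≤ j → j ≤ b + k → Good T j := by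
    intro j h1 h2
    by_contra h
    have : j ∈ Bad T := by rw [hmemBad]; exact ⟨h1, h2, h⟩
    rw [hT] at this
    exact absurd this (Finset.notMem_empty j)
  refine ⟨T, ?_, ?_⟩
  · intro t ht j h1 h2
    obtain ⟨c, hc1, hc2, hcc⟩ := hgoodT j h1 h2
    have key : ∀ d, ∀ j', c ≤ j' → j' ≤ c + k → u (T + d) j' = u T c := by
      intro d
      induction d with
      | zero => exact hcc
      | succ m ih =>
        intro j' a1 a2
        rw [show T + (m + 1) = (T + m) + 1 by omega, hstep]
        exact run_stable k (u (T + m)) (hpm (T + m)) c (u T c)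
          (hpm T c) ih j' a1 a2
    obtain ⟨d, rfl⟩ := Nat.exists_eq_add_of_le ht
    show u (T + d) j = u T j
    rw [key d j hc1 hc2, ← hcc j hc1 hc2]
  · intro j h1 h2
    exact hgoodT j h1 h2
end

section
/- For k = 2, the bi-infinite repetition of the block EI is a temporally periodic state of period exactly two: the configuration s : ℤ → {−1, 1} of spatial period 6 given on one period by (s(0),...,s(5)) = (1, −1, 1, −1, −1, 1) satisfies T(T(s)) = s and T(s) ≠ s; in fact T(s) is the spatial-period-6 configuration given on one period by (1, 1, −1, −1, 1, −1) (the repetition of the block GF). -/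
lemma nbhd_eq (s : ℤ → ℤ) (i : ℤ) :
    nbhdSum 2 s i = s (i-2) + s (i-1) + s i + s (i+1) + s (i+2) := by
  have h : Finset.Icc (-(2:ℤ)) 2 = {-2, -1, 0, 1, 2} := by decide
  unfold nbhdSum
  norm_num only
  rw [h]
  norm_num [Finset.sum_insert, Finset.mem_insert]
  ring

lemma mod_val {s : ℤ → ℤ} (hper : ∀ i : ℤ, s (i + 6) = s i) (i : ℤ) :
    s i = s (i % 6) := by
  have h : ∀ n : ℤ, s (i % 6 + 6 * n) = s (i % 6) := by
    intro n
    induction n using Int.induction_on with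
    | zero => simp
    | succ n ih => rw [show i % 6 + 6 * ((n:ℤ)+1) = (i % 6 + 6 * n) + 6 by ring, hper, ih]
    | pred n ih =>
        have := hper (i % 6 + 6 * (-(n:ℤ)-1))
        rw [show i % 6 + 6 * (-(n:ℤ)-1) + 6 = i % 6 + 6 * (-(n:ℤ)) by ring] at this
        rw [← this, ih]
  have := h (i / 6)
  rwa [show i % 6 + 6 * (i / 6) = i by omega] at this

lemma table {s : ℤ → ℤ} (hper : ∀ i : ℤ, s (i + 6) = s i)
    (a0 a1 a2 a3 a4 a5 : ℤ)
    (h0 : s 0 = a0) (h1 : s 1 = a1) (h2 : s 2 = a2)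
    (h3 : s 3 = a3) (h4 : s 4 = a4) (h5 : s 5 = a5) (i : ℤ) :
    s i = if i % 6 = 0 then a0 else if i % 6 = 1 then a1 else if i % 6 = 2 then a2
      else if i % 6 = 3 then a3 else if i % 6 = 4 then a4 else a5 := by
  rw [mod_val hper]
  have : i % 6 = 0 ∨ i % 6 = 1 ∨ i % 6 = 2 ∨ i % 6 = 3 ∨ i % 6 = 4 ∨ i % 6 = 5 := by omega
  rcases this with h | h | h | h | h | h <;> rw [h] <;> norm_num <;> assumption

lemma up_per {s : ℤ → ℤ} (hper : ∀ i : ℤ, s (i + 6) = s i) (i : ℤ) :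
    update 2 s (i + 6) = update 2 s i := by
  have h : nbhdSum 2 s (i + 6) = nbhdSum 2 s i := by
    rw [nbhd_eq, nbhd_eq,
      show i+6-2 = (i-2)+6 by ring, show i+6-1 = (i-1)+6 by ring,
      show i+6+1 = (i+1)+6 by ring, show i+6+2 = (i+2)+6 by ring,
      hper, hper, hper, hper, hper]
  simp only [update, h, hper]


/-- For `k = 2`, the bi-infinite repetition of the block `EI`, i.e. the
spatial-period-6 configuration `(+,-,+,-,-,+)`, is temporally periodic of
period exactly two; one step yields the repetition of `GF = (+,+,-,-,+,-)`. -/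
theorem EI_period_two (s : ℤ → ℤ)
    (hper : ∀ i : ℤ, s (i + 6) = s i)
    (h0 : s 0 = 1) (h1 : s 1 = -1) (h2 : s 2 = 1)
    (h3 : s 3 = -1) (h4 : s 4 = -1) (h5 : s 5 = 1) :
    update 2 (update 2 s) = s ∧ update 2 s ≠ s ∧
    (∀ i : ℤ, update 2 s (i + 6) = update 2 s i) ∧
    update 2 s 0 = 1 ∧ update 2 s 1 = 1 ∧ update 2 s 2 = -1 ∧
    update 2 s 3 = -1 ∧ update 2 s 4 = 1 ∧ update 2 s 5 = -1 := by
  have hs := table hper 1 (-1) 1 (-1) (-1) 1 h0 h1 h2 h3 h4 h5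
  have hu : ∀ r : ℤ, update 2 s r =
      if 0 < nbhdSum 2 s r then 1 else if nbhdSum 2 s r < 0 then -1 else s r := fun _ => rfl
  have u0 : update 2 s 0 = 1 := by rw [hu, nbhd_eq]; norm_num [hs]
  have u1 : update 2 s 1 = 1 := by rw [hu, nbhd_eq]; norm_num [hs]
  have u2 : update 2 s 2 = -1 := by rw [hu, nbhd_eq]; norm_num [hs]
  have u3 : update 2 s 3 = -1 := by rw [hu, nbhd_eq]; norm_num [hs]
  have u4 : update 2 s 4 = 1 := by rw [hu, nbhd_eq]; norm_num [hs]
  have u5 : update 2 s 5 = -1 := by rw [hu, nbhd_eq]; norm_num [hs]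
  have uper := up_per hper
  have hus := table uper 1 1 (-1) (-1) 1 (-1) u0 u1 u2 u3 u4 u5
  have hv : ∀ r : ℤ, update 2 (update 2 s) r =
      if 0 < nbhdSum 2 (update 2 s) r then 1
      else if nbhdSum 2 (update 2 s) r < 0 then -1 else update 2 s r := fun _ => rfl
  refine ⟨?_, ?_, uper, u0, u1, u2, u3, u4, u5⟩
  · funext i
    rw [mod_val (up_per uper) i, mod_val hper i]
    have : i % 6 = 0 ∨ i % 6 = 1 ∨ i % 6 = 2 ∨ i % 6 = 3 ∨ i % 6 = 4 ∨ i % 6 = 5 := by omega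
    rcases this with h | h | h | h | h | h <;> rw [h] <;> rw [hv, nbhd_eq] <;>
      norm_num [hus, h0, h1, h2, h3, h4, h5]
  · intro h
    rw [h] at u1
    omega
end

section
/- For k = 2, the bi-infinite repetition of the block GJ is a temporally periodic state of period exactly two: the configuration s : ℤ → {−1, 1} of spatial period 6 given on one period by (s(0),...,s(5)) = (1, 1, −1, 1, −1, −1) satisfies T(T(s)) = s and T(s) ≠ s; in fact T(s) is the spatial-period-6 configuration given on one period by (−1, 1, 1, −1, −1, 1) (a shifted repetition of the block IH). -/
lemma nbhd2 (s : ℤ → ℤ) (i : ℤ) :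
    nbhdSum 2 s i = s (i + -2) + s (i + -1) + s (i + 0) + s (i + 1) + s (i + 2) := by
  have h : (Finset.Icc (-(2:ℤ)) 2) = {-2,-1,0,1,2} := by decide
  rw [nbhdSum]
  norm_num [h, Finset.sum_insert]
  ring

lemma step6 (s v : ℤ → ℤ) (hv : ∀ i, s i = v (i % 6)) (i : ℤ) :
    update 2 s i =
      if 0 < v ((i + -2) % 6) + v ((i + -1) % 6) + v (i % 6) + v ((i + 1) % 6) + v ((i + 2) % 6)
      then 1
      else if v ((i + -2) % 6) + v ((i + -1) % 6) + v (i % 6) + v ((i + 1) % 6) + v ((i + 2) % 6) < 0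
      then -1 else v (i % 6) := by
  have hsum : nbhdSum 2 s i =
      v ((i + -2) % 6) + v ((i + -1) % 6) + v (i % 6) + v ((i + 1) % 6) + v ((i + 2) % 6) := by
    rw [nbhd2, hv (i + -2), hv (i + -1), hv (i + 0), hv (i + 1), hv (i + 2)]
    norm_num
  simp only [update, hsum, hv i]

/-- value table for GJ pattern -/
def vGJ : ℤ → ℤ := fun r =>
  if r = 0 then 1 else if r = 1 then 1 else if r = 2 then -1
  else if r = 3 then 1 else if r = 4 then -1 else -1

/-- value table for shifted IH pattern -/
def vIH : ℤ → ℤ := fun r =>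
  if r = 0 then -1 else if r = 1 then 1 else if r = 2 then 1
  else if r = 3 then -1 else if r = 4 then -1 else 1

lemma upd_of_table (s v w : ℤ → ℤ) (hv : ∀ i, s i = v (i % 6))
    (hw : ∀ r : ℤ, 0 ≤ r → r < 6 →
      w r = if 0 < v ((r + -2) % 6) + v ((r + -1) % 6) + v r + v ((r + 1) % 6) + v ((r + 2) % 6)
            then 1
            else if v ((r + -2) % 6) + v ((r + -1) % 6) + v r + v ((r + 1) % 6) + v ((r + 2) % 6) < 0
            then -1 else v r) :
    ∀ i, update 2 s i = w (i % 6) := by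
  intro i
  rw [step6 s v hv i]
  have e2 : (i + -2) % 6 = (i % 6 + -2) % 6 := by omega
  have e1 : (i + -1) % 6 = (i % 6 + -1) % 6 := by omega
  have f1 : (i + 1) % 6 = (i % 6 + 1) % 6 := by omega
  have f2 : (i + 2) % 6 = (i % 6 + 2) % 6 := by omega
  have hr0 : 0 ≤ i % 6 := by omega
  have hr6 : i % 6 < 6 := by omega
  rw [e2, e1, f1, f2, hw (i % 6) hr0 hr6]

/-- For `k = 2`, the bi-infinite repetition of the block `GJ`, i.e. the
spatial-period-6 configuration `(+,+,-,+,-,-)`, is temporally periodic of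
period exactly two; one step yields the spatial-period-6 configuration
`(-,+,+,-,-,+)` (a shifted repetition of `IH`). -/
theorem GJ_period_two (s : ℤ → ℤ)
    (hper : ∀ i : ℤ, s (i + 6) = s i)
    (h0 : s 0 = 1) (h1 : s 1 = 1) (h2 : s 2 = -1)
    (h3 : s 3 = 1) (h4 : s 4 = -1) (h5 : s 5 = -1) :
    update 2 (update 2 s) = s ∧ update 2 s ≠ s ∧
    (∀ i : ℤ, update 2 s (i + 6) = update 2 s i) ∧
    update 2 s 0 = -1 ∧ update 2 s 1 = 1 ∧ update 2 s 2 = 1 ∧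
    update 2 s 3 = -1 ∧ update 2 s 4 = -1 ∧ update 2 s 5 = 1 := by
  have hp : Function.Periodic s 6 := hper
  have hs6 : ∀ i : ℤ, s i = s (i % 6) := by
    intro i
    have h := (hp.int_mul (i / 6)) (i % 6)
    simp only [Int.cast_id] at h
    have he : i % 6 + (i / 6) * 6 = i := by omega
    rw [he] at h
    exact h
  have hv : ∀ i, s i = vGJ (i % 6) := by
    intro i
    rw [hs6 i]
    have h : i % 6 = 0 ∨ i % 6 = 1 ∨ i % 6 = 2 ∨ i % 6 = 3 ∨ i % 6 = 4 ∨ i % 6 = 5 := by omega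
    rcases h with h | h | h | h | h | h <;> rw [h] <;> simp [vGJ, h0, h1, h2, h3, h4, h5]
  have hT : ∀ i, update 2 s i = vIH (i % 6) := by
    apply upd_of_table s vGJ vIH hv
    intro r hr0 hr6
    interval_cases r <;> norm_num [vGJ, vIH]
  have hTT : ∀ i, update 2 (update 2 s) i = vGJ (i % 6) := by
    apply upd_of_table (update 2 s) vIH vGJ hT
    intro r hr0 hr6
    interval_cases r <;> norm_num [vGJ, vIH]
  refine ⟨funext fun i => (hTT i).trans (hv i).symm, ?_, ?_, ?_, ?_, ?_, ?_, ?_, ?_⟩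
  · intro h
    have := congrFun h 0
    rw [hT 0, h0] at this
    norm_num [vIH] at this
  · intro i
    rw [hT (i + 6), hT i]
    congr 1
    omega
  all_goals (rw [hT]; norm_num [vIH])
end

section
/- Main classification theorem for k = 2: for the majority-rule cellular automaton on ℤ with k = 2 and an arbitrary initial configuration s : ℤ → {−1, 1}, every site is eventually periodic in time with period dividing two; that is, for every site i there exists a time T such that for all t ≥ T, T^{t+2}(s)(i) = T^t(s)(i). In particular, the only attractors are spatially homogeneous states, steady states, and temporally periodic states of period two, and no chaotic or complex-structure attractors occur. -/
lemma sum5 (s : ℤ → ℤ) (j : ℤ) :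
    nbhdSum 2 s j = s (j-2) + s (j-1) + s j + s (j+1) + s (j+2) := by
  unfold nbhdSum
  rw [show (Finset.Icc (-(2:ℕ):ℤ) (2:ℕ)) = ({-2,-1,0,1,2} : Finset ℤ) from by
    ext x; simp [Finset.mem_Icc]; omega]
  simp only [Finset.sum_insert, Finset.mem_insert, Finset.mem_singleton, Finset.sum_singleton,
    show ((-2:ℤ) = -1 ∨ (-2:ℤ)=0 ∨ (-2:ℤ)=1 ∨ (-2:ℤ)=2) = False by simp,
    show ((-1:ℤ)=0 ∨ (-1:ℤ)=1 ∨ (-1:ℤ)=2) = False by simp,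
    show ((0:ℤ)=1 ∨ (0:ℤ)=2) = False by simp,
    show ((1:ℤ)=2) = False by simp, or_false, false_or, if_false, not_false_iff]
  rw [show j + -2 = j - 2 by ring, show j + -1 = j - 1 by ring, add_zero]
  ring

def maj (a b c d e : Bool) : Bool :=
  decide (3 ≤ a.toNat + b.toNat + c.toNat + d.toNat + e.toNat)

def toB (v : ℤ) : Bool := decide (0 < v)

def ofB (b : Bool) : ℤ := cond b 1 (-1)

lemma ofB_toB {v : ℤ} (h : v = 1 ∨ v = -1) : ofB (toB v) = v := by
  rcases h with rfl | rfl <;> rfl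

lemma toB_ofB (b : Bool) : toB (ofB b) = b := by cases b <;> rfl

lemma eqB {u v : ℤ} (hu : u = 1 ∨ u = -1) (hv : v = 1 ∨ v = -1) :
    u = v ↔ toB u = toB v := by
  rcases hu with rfl | rfl <;> rcases hv with rfl | rfl <;> simp [toB]

lemma pm_update (s : ℤ → ℤ) (hs : ∀ i, s i = 1 ∨ s i = -1) :
    ∀ i, update 2 s i = 1 ∨ update 2 s i = -1 := by
  intro i; unfold update
  split_ifs with h1 h2
  · exact Or.inl rfl
  · exact Or.inr rfl
  · exact hs i

lemma pm_iter (s : ℤ → ℤ) (hs : ∀ i, s i = 1 ∨ s i = -1) :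
    ∀ t : ℕ, ∀ i, (update 2)^[t] s i = 1 ∨ (update 2)^[t] s i = -1 := by
  intro t
  induction t with
  | zero => exact hs
  | succ n ih =>
    intro i
    rw [Function.iterate_succ_apply']
    exact pm_update _ ih i

lemma update2_eq (x : ℤ → ℤ) (hx : ∀ j, x j = 1 ∨ x j = -1) (j : ℤ) :
    update 2 x j = ofB (maj (toB (x (j-2))) (toB (x (j-1))) (toB (x j)) (toB (x (j+1))) (toB (x (j+2)))) := by
  unfold update
  rw [sum5 x j]
  rcases hx (j-2) with h1|h1 <;> rcases hx (j-1) with h2|h2 <;> rcases hx j with h3|h3 <;>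
    rcases hx (j+1) with h4|h4 <;> rcases hx (j+2) with h5|h5 <;>
    rw [h1, h2, h3, h4, h5] <;> norm_num [toB, maj, ofB]

lemma toB_update (x : ℤ → ℤ) (hx : ∀ j, x j = 1 ∨ x j = -1) (j : ℤ) :
    toB (update 2 x j) = maj (toB (x (j-2))) (toB (x (j-1))) (toB (x j)) (toB (x (j+1))) (toB (x (j+2))) := by
  rw [update2_eq x hx j, toB_ofB]

set_option maxRecDepth 100000 in
set_option synthInstance.maxSize 1000000 in
lemma master : ∀ a0 a1 a2 a3 a4 a5 a6 a7 a8 a9 a10 a11 a12 : Bool,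
    (¬(a0 = a1 ∧ a1 = a2) ∧
     ¬(a1 = a2 ∧ a2 = a3) ∧
     ¬(a2 = a3 ∧ a3 = a4) ∧
     ¬(a3 = a4 ∧ a4 = a5) ∧
     ¬(a4 = a5 ∧ a5 = a6) ∧
     ¬(a5 = a6 ∧ a6 = a7) ∧
     ¬(a6 = a7 ∧ a7 = a8) ∧
     ¬(a7 = a8 ∧ a8 = a9) ∧
     ¬(a8 = a9 ∧ a9 = a10) ∧
     ¬(a9 = a10 ∧ a10 = a11) ∧
     ¬(a10 = a11 ∧ a11 = a12) ∧
     ¬((maj a0 a1 a2 a3 a4) = (maj a1 a2 a3 a4 a5) ∧ (maj a1 a2 a3 a4 a5) = (maj a2 a3 a4 a5 a6)) ∧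
     ¬((maj a1 a2 a3 a4 a5) = (maj a2 a3 a4 a5 a6) ∧ (maj a2 a3 a4 a5 a6) = (maj a3 a4 a5 a6 a7)) ∧
     ¬((maj a2 a3 a4 a5 a6) = (maj a3 a4 a5 a6 a7) ∧ (maj a3 a4 a5 a6 a7) = (maj a4 a5 a6 a7 a8)) ∧
     ¬((maj a3 a4 a5 a6 a7) = (maj a4 a5 a6 a7 a8) ∧ (maj a4 a5 a6 a7 a8) = (maj a5 a6 a7 a8 a9)) ∧
     ¬((maj a4 a5 a6 a7 a8) = (maj a5 a6 a7 a8 a9) ∧ (maj a5 a6 a7 a8 a9) = (maj a6 a7 a8 a9 a10)) ∧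
     ¬((maj a5 a6 a7 a8 a9) = (maj a6 a7 a8 a9 a10) ∧ (maj a6 a7 a8 a9 a10) = (maj a7 a8 a9 a10 a11)) ∧
     ¬((maj a6 a7 a8 a9 a10) = (maj a7 a8 a9 a10 a11) ∧ (maj a7 a8 a9 a10 a11) = (maj a8 a9 a10 a11 a12)) ∧
     ¬((maj (maj a0 a1 a2 a3 a4) (maj a1 a2 a3 a4 a5) (maj a2 a3 a4 a5 a6) (maj a3 a4 a5 a6 a7) (maj a4 a5 a6 a7 a8)) = (maj (maj a1 a2 a3 a4 a5) (maj a2 a3 a4 a5 a6) (maj a3 a4 a5 a6 a7) (maj a4 a5 a6 a7 a8) (maj a5 a6 a7 a8 a9)) ∧ (maj (maj a1 a2 a3 a4 a5) (maj a2 a3 a4 a5 a6) (maj a3 a4 a5 a6 a7) (maj a4 a5 a6 a7 a8) (maj a5 a6 a7 a8 a9)) = (maj (maj a2 a3 a4 a5 a6) (maj a3 a4 a5 a6 a7) (maj a4 a5 a6 a7 a8) (maj a5 a6 a7 a8 a9) (maj a6 a7 a8 a9 a10))) ∧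
     ¬((maj (maj a1 a2 a3 a4 a5) (maj a2 a3 a4 a5 a6) (maj a3 a4 a5 a6 a7) (maj a4 a5 a6 a7 a8) (maj a5 a6 a7 a8 a9)) = (maj (maj a2 a3 a4 a5 a6) (maj a3 a4 a5 a6 a7) (maj a4 a5 a6 a7 a8) (maj a5 a6 a7 a8 a9) (maj a6 a7 a8 a9 a10)) ∧ (maj (maj a2 a3 a4 a5 a6) (maj a3 a4 a5 a6 a7) (maj a4 a5 a6 a7 a8) (maj a5 a6 a7 a8 a9) (maj a6 a7 a8 a9 a10)) = (maj (maj a3 a4 a5 a6 a7) (maj a4 a5 a6 a7 a8) (maj a5 a6 a7 a8 a9) (maj a6 a7 a8 a9 a10) (maj a7 a8 a9 a10 a11))) ∧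
     ¬((maj (maj a2 a3 a4 a5 a6) (maj a3 a4 a5 a6 a7) (maj a4 a5 a6 a7 a8) (maj a5 a6 a7 a8 a9) (maj a6 a7 a8 a9 a10)) = (maj (maj a3 a4 a5 a6 a7) (maj a4 a5 a6 a7 a8) (maj a5 a6 a7 a8 a9) (maj a6 a7 a8 a9 a10) (maj a7 a8 a9 a10 a11)) ∧ (maj (maj a3 a4 a5 a6 a7) (maj a4 a5 a6 a7 a8) (maj a5 a6 a7 a8 a9) (maj a6 a7 a8 a9 a10) (maj a7 a8 a9 a10 a11)) = (maj (maj a4 a5 a6 a7 a8) (maj a5 a6 a7 a8 a9) (maj a6 a7 a8 a9 a10) (maj a7 a8 a9 a10 a11) (maj a8 a9 a10 a11 a12)))) →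
    (maj (maj a2 a3 a4 a5 a6) (maj a3 a4 a5 a6 a7) (maj a4 a5 a6 a7 a8) (maj a5 a6 a7 a8 a9) (maj a6 a7 a8 a9 a10)) = a6 := by decide

lemma key (x : ℤ → ℤ) (hx : ∀ j, x j = 1 ∨ x j = -1) (i : ℤ)
    (h0 : ∀ a : ℤ, ¬(x a = x (a+1) ∧ x (a+1) = x (a+2)))
    (h1 : ∀ a : ℤ, ¬(update 2 x a = update 2 x (a+1) ∧ update 2 x (a+1) = update 2 x (a+2)))
    (h2 : ∀ a : ℤ, ¬(update 2 (update 2 x) a = update 2 (update 2 x) (a+1) ∧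
        update 2 (update 2 x) (a+1) = update 2 (update 2 x) (a+2))) :
    update 2 (update 2 x) i = x i := by
  have hy : ∀ j, update 2 x j = 1 ∨ update 2 x j = -1 := pm_update x hx
  have hz : ∀ j, update 2 (update 2 x) j = 1 ∨ update 2 (update 2 x) j = -1 := pm_update _ hy
  have Fm4 : toB (update 2 x (i + (-4))) = (maj (toB (x (i + (-6)))) (toB (x (i + (-5)))) (toB (x (i + (-4)))) (toB (x (i + (-3)))) (toB (x (i + (-2))))) := by
    have h := toB_update x hx (i + (-4))
    simp only [show (i + (-4)) - 2 = (i + (-6)) by ring, show (i + (-4)) - 1 = (i + (-5)) by ring,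
      show (i + (-4)) + 1 = (i + (-3)) by ring, show (i + (-4)) + 2 = (i + (-2)) by ring] at h
    exact h
  have Fm3 : toB (update 2 x (i + (-3))) = (maj (toB (x (i + (-5)))) (toB (x (i + (-4)))) (toB (x (i + (-3)))) (toB (x (i + (-2)))) (toB (x (i + (-1))))) := by
    have h := toB_update x hx (i + (-3))
    simp only [show (i + (-3)) - 2 = (i + (-5)) by ring, show (i + (-3)) - 1 = (i + (-4)) by ring,
      show (i + (-3)) + 1 = (i + (-2)) by ring, show (i + (-3)) + 2 = (i + (-1)) by ring] at h
    exact h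
  have Fm2 : toB (update 2 x (i + (-2))) = (maj (toB (x (i + (-4)))) (toB (x (i + (-3)))) (toB (x (i + (-2)))) (toB (x (i + (-1)))) (toB (x i))) := by
    have h := toB_update x hx (i + (-2))
    simp only [show (i + (-2)) - 2 = (i + (-4)) by ring, show (i + (-2)) - 1 = (i + (-3)) by ring,
      show (i + (-2)) + 1 = (i + (-1)) by ring, show (i + (-2)) + 2 = i by ring] at h
    exact h
  have Fm1 : toB (update 2 x (i + (-1))) = (maj (toB (x (i + (-3)))) (toB (x (i + (-2)))) (toB (x (i + (-1)))) (toB (x i)) (toB (x (i + (1))))) := by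
    have h := toB_update x hx (i + (-1))
    simp only [show (i + (-1)) - 2 = (i + (-3)) by ring, show (i + (-1)) - 1 = (i + (-2)) by ring,
      show (i + (-1)) + 1 = i by ring, show (i + (-1)) + 2 = (i + (1)) by ring] at h
    exact h
  have F0 : toB (update 2 x i) = (maj (toB (x (i + (-2)))) (toB (x (i + (-1)))) (toB (x i)) (toB (x (i + (1)))) (toB (x (i + (2))))) := by
    have h := toB_update x hx i
    simp only [show i - 2 = (i + (-2)) by ring, show i - 1 = (i + (-1)) by ring,
      show i + 1 = (i + (1)) by ring, show i + 2 = (i + (2)) by ring] at h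
    exact h
  have F1 : toB (update 2 x (i + (1))) = (maj (toB (x (i + (-1)))) (toB (x i)) (toB (x (i + (1)))) (toB (x (i + (2)))) (toB (x (i + (3))))) := by
    have h := toB_update x hx (i + (1))
    simp only [show (i + (1)) - 2 = (i + (-1)) by ring, show (i + (1)) - 1 = i by ring,
      show (i + (1)) + 1 = (i + (2)) by ring, show (i + (1)) + 2 = (i + (3)) by ring] at h
    exact h
  have F2 : toB (update 2 x (i + (2))) = (maj (toB (x i)) (toB (x (i + (1)))) (toB (x (i + (2)))) (toB (x (i + (3)))) (toB (x (i + (4))))) := by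
    have h := toB_update x hx (i + (2))
    simp only [show (i + (2)) - 2 = i by ring, show (i + (2)) - 1 = (i + (1)) by ring,
      show (i + (2)) + 1 = (i + (3)) by ring, show (i + (2)) + 2 = (i + (4)) by ring] at h
    exact h
  have F3 : toB (update 2 x (i + (3))) = (maj (toB (x (i + (1)))) (toB (x (i + (2)))) (toB (x (i + (3)))) (toB (x (i + (4)))) (toB (x (i + (5))))) := by
    have h := toB_update x hx (i + (3))
    simp only [show (i + (3)) - 2 = (i + (1)) by ring, show (i + (3)) - 1 = (i + (2)) by ring,
      show (i + (3)) + 1 = (i + (4)) by ring, show (i + (3)) + 2 = (i + (5)) by ring] at h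
    exact h
  have F4 : toB (update 2 x (i + (4))) = (maj (toB (x (i + (2)))) (toB (x (i + (3)))) (toB (x (i + (4)))) (toB (x (i + (5)))) (toB (x (i + (6))))) := by
    have h := toB_update x hx (i + (4))
    simp only [show (i + (4)) - 2 = (i + (2)) by ring, show (i + (4)) - 1 = (i + (3)) by ring,
      show (i + (4)) + 1 = (i + (5)) by ring, show (i + (4)) + 2 = (i + (6)) by ring] at h
    exact h
  have Gm2 : toB (update 2 (update 2 x) (i + (-2))) = (maj (maj (toB (x (i + (-6)))) (toB (x (i + (-5)))) (toB (x (i + (-4)))) (toB (x (i + (-3)))) (toB (x (i + (-2))))) (maj (toB (x (i + (-5)))) (toB (x (i + (-4)))) (toB (x (i + (-3)))) (toB (x (i + (-2)))) (toB (x (i + (-1))))) (maj (toB (x (i + (-4)))) (toB (x (i + (-3)))) (toB (x (i + (-2)))) (toB (x (i + (-1)))) (toB (x i))) (maj (toB (x (i + (-3)))) (toB (x (i + (-2)))) (toB (x (i + (-1)))) (toB (x i)) (toB (x (i + (1))))) (maj (toB (x (i + (-2)))) (toB (x (i + (-1)))) (toB (x i)) (toB (x (i + (1)))) (toB (x (i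 + (2)))))) := by
    have h := toB_update (update 2 x) hy (i + (-2))
    simp only [show (i + (-2)) - 2 = (i + (-4)) by ring, show (i + (-2)) - 1 = (i + (-3)) by ring,
      show (i + (-2)) + 1 = (i + (-1)) by ring, show (i + (-2)) + 2 = i by ring] at h
    rw [Fm4, Fm3, Fm2, Fm1, F0] at h
    exact h
  have Gm1 : toB (update 2 (update 2 x) (i + (-1))) = (maj (maj (toB (x (i + (-5)))) (toB (x (i + (-4)))) (toB (x (i + (-3)))) (toB (x (i + (-2)))) (toB (x (i + (-1))))) (maj (toB (x (i + (-4)))) (toB (x (i + (-3)))) (toB (x (i + (-2)))) (toB (x (i + (-1)))) (toB (x i))) (maj (toB (x (i + (-3)))) (toB (x (i + (-2)))) (toB (x (i + (-1)))) (toB (x i)) (toB (x (i + (1))))) (maj (toB (x (i + (-2)))) (toB (x (i + (-1)))) (toB (x i)) (toB (x (i + (1)))) (toB (x (i + (2))))) (maj (toB (x (i + (-1)))) (toB (x i)) (toB (x (i + (1)))) (toB (x (i + (2)))) (toB (x (i + (3)))))) := by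
    have h := toB_update (update 2 x) hy (i + (-1))
    simp only [show (i + (-1)) - 2 = (i + (-3)) by ring, show (i + (-1)) - 1 = (i + (-2)) by ring,
      show (i + (-1)) + 1 = i by ring, show (i + (-1)) + 2 = (i + (1)) by ring] at h
    rw [Fm3, Fm2, Fm1, F0, F1] at h
    exact h
  have G0 : toB (update 2 (update 2 x) i) = (maj (maj (toB (x (i + (-4)))) (toB (x (i + (-3)))) (toB (x (i + (-2)))) (toB (x (i + (-1)))) (toB (x i))) (maj (toB (x (i + (-3)))) (toB (x (i + (-2)))) (toB (x (i + (-1)))) (toB (x i)) (toB (x (i + (1))))) (maj (toB (x (i + (-2)))) (toB (x (i + (-1)))) (toB (x i)) (toB (x (i + (1)))) (toB (x (i + (2))))) (maj (toB (x (i + (-1)))) (toB (x i)) (toB (x (i + (1)))) (toB (x (i + (2)))) (toB (x (i + (3))))) (maj (toB (x i)) (toB (x (i + (1)))) (toB (x (i + (2)))) (toB (x (i + (3)))) (toB (x (i + (4)))))) := by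
    have h := toB_update (update 2 x) hy i
    simp only [show i - 2 = (i + (-2)) by ring, show i - 1 = (i + (-1)) by ring,
      show i + 1 = (i + (1)) by ring, show i + 2 = (i + (2)) by ring] at h
    rw [Fm2, Fm1, F0, F1, F2] at h
    exact h
  have G1 : toB (update 2 (update 2 x) (i + (1))) = (maj (maj (toB (x (i + (-3)))) (toB (x (i + (-2)))) (toB (x (i + (-1)))) (toB (x i)) (toB (x (i + (1))))) (maj (toB (x (i + (-2)))) (toB (x (i + (-1)))) (toB (x i)) (toB (x (i + (1)))) (toB (x (i + (2))))) (maj (toB (x (i + (-1)))) (toB (x i)) (toB (x (i + (1)))) (toB (x (i + (2)))) (toB (x (i + (3))))) (maj (toB (x i)) (toB (x (i + (1)))) (toB (x (i + (2)))) (toB (x (i + (3)))) (toB (x (i + (4))))) (maj (toB (x (i + (1)))) (toB (x (i + (2)))) (toB (x (i + (3)))) (toB (x (i + (4)))) (toB (x (i + (5)))))) := by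
    have h := toB_update (update 2 x) hy (i + (1))
    simp only [show (i + (1)) - 2 = (i + (-1)) by ring, show (i + (1)) - 1 = i by ring,
      show (i + (1)) + 1 = (i + (2)) by ring, show (i + (1)) + 2 = (i + (3)) by ring] at h
    rw [Fm1, F0, F1, F2, F3] at h
    exact h
  have G2 : toB (update 2 (update 2 x) (i + (2))) = (maj (maj (toB (x (i + (-2)))) (toB (x (i + (-1)))) (toB (x i)) (toB (x (i + (1)))) (toB (x (i + (2))))) (maj (toB (x (i + (-1)))) (toB (x i)) (toB (x (i + (1)))) (toB (x (i + (2)))) (toB (x (i + (3))))) (maj (toB (x i)) (toB (x (i + (1)))) (toB (x (i + (2)))) (toB (x (i + (3)))) (toB (x (i + (4))))) (maj (toB (x (i + (1)))) (toB (x (i + (2)))) (toB (x (i + (3)))) (toB (x (i + (4)))) (toB (x (i + (5))))) (maj (toB (x (i + (2)))) (toB (x (i + (3)))) (toB (x (i + (4)))) (toB (x (i + (5)))) (toB (x (i + (6)))))) := by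
    have h := toB_update (update 2 x) hy (i + (2))
    simp only [show (i + (2)) - 2 = i by ring, show (i + (2)) - 1 = (i + (1)) by ring,
      show (i + (2)) + 1 = (i + (3)) by ring, show (i + (2)) + 2 = (i + (4)) by ring] at h
    rw [F0, F1, F2, F3, F4] at h
    exact h
  have H0m6 : ¬((toB (x (i + (-6)))) = (toB (x (i + (-5)))) ∧ (toB (x (i + (-5)))) = (toB (x (i + (-4))))) := by
    have h := h0 (i + (-6))
    simp only [show (i + (-6)) + 1 = (i + (-5)) by ring, show (i + (-6)) + 2 = (i + (-4)) by ring] at h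
    exact fun hc => h ⟨(eqB (hx _) (hx _)).mpr hc.1, (eqB (hx _) (hx _)).mpr hc.2⟩
  have H0m5 : ¬((toB (x (i + (-5)))) = (toB (x (i + (-4)))) ∧ (toB (x (i + (-4)))) = (toB (x (i + (-3))))) := by
    have h := h0 (i + (-5))
    simp only [show (i + (-5)) + 1 = (i + (-4)) by ring, show (i + (-5)) + 2 = (i + (-3)) by ring] at h
    exact fun hc => h ⟨(eqB (hx _) (hx _)).mpr hc.1, (eqB (hx _) (hx _)).mpr hc.2⟩
  have H0m4 : ¬((toB (x (i + (-4)))) = (toB (x (i + (-3)))) ∧ (toB (x (i + (-3)))) = (toB (x (i + (-2))))) := by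
    have h := h0 (i + (-4))
    simp only [show (i + (-4)) + 1 = (i + (-3)) by ring, show (i + (-4)) + 2 = (i + (-2)) by ring] at h
    exact fun hc => h ⟨(eqB (hx _) (hx _)).mpr hc.1, (eqB (hx _) (hx _)).mpr hc.2⟩
  have H0m3 : ¬((toB (x (i + (-3)))) = (toB (x (i + (-2)))) ∧ (toB (x (i + (-2)))) = (toB (x (i + (-1))))) := by
    have h := h0 (i + (-3))
    simp only [show (i + (-3)) + 1 = (i + (-2)) by ring, show (i + (-3)) + 2 = (i + (-1)) by ring] at h
    exact fun hc => h ⟨(eqB (hx _) (hx _)).mpr hc.1, (eqB (hx _) (hx _)).mpr hc.2⟩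
  have H0m2 : ¬((toB (x (i + (-2)))) = (toB (x (i + (-1)))) ∧ (toB (x (i + (-1)))) = (toB (x i))) := by
    have h := h0 (i + (-2))
    simp only [show (i + (-2)) + 1 = (i + (-1)) by ring, show (i + (-2)) + 2 = i by ring] at h
    exact fun hc => h ⟨(eqB (hx _) (hx _)).mpr hc.1, (eqB (hx _) (hx _)).mpr hc.2⟩
  have H0m1 : ¬((toB (x (i + (-1)))) = (toB (x i)) ∧ (toB (x i)) = (toB (x (i + (1))))) := by
    have h := h0 (i + (-1))
    simp only [show (i + (-1)) + 1 = i by ring, show (i + (-1)) + 2 = (i + (1)) by ring] at h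
    exact fun hc => h ⟨(eqB (hx _) (hx _)).mpr hc.1, (eqB (hx _) (hx _)).mpr hc.2⟩
  have H00 : ¬((toB (x i)) = (toB (x (i + (1)))) ∧ (toB (x (i + (1)))) = (toB (x (i + (2))))) := by
    have h := h0 i
    exact fun hc => h ⟨(eqB (hx _) (hx _)).mpr hc.1, (eqB (hx _) (hx _)).mpr hc.2⟩
  have H01 : ¬((toB (x (i + (1)))) = (toB (x (i + (2)))) ∧ (toB (x (i + (2)))) = (toB (x (i + (3))))) := by
    have h := h0 (i + (1))
    simp only [show (i + (1)) + 1 = (i + (2)) by ring, show (i + (1)) + 2 = (i + (3)) by ring] at h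
    exact fun hc => h ⟨(eqB (hx _) (hx _)).mpr hc.1, (eqB (hx _) (hx _)).mpr hc.2⟩
  have H02 : ¬((toB (x (i + (2)))) = (toB (x (i + (3)))) ∧ (toB (x (i + (3)))) = (toB (x (i + (4))))) := by
    have h := h0 (i + (2))
    simp only [show (i + (2)) + 1 = (i + (3)) by ring, show (i + (2)) + 2 = (i + (4)) by ring] at h
    exact fun hc => h ⟨(eqB (hx _) (hx _)).mpr hc.1, (eqB (hx _) (hx _)).mpr hc.2⟩
  have H03 : ¬((toB (x (i + (3)))) = (toB (x (i + (4)))) ∧ (toB (x (i + (4)))) = (toB (x (i + (5))))) := by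
    have h := h0 (i + (3))
    simp only [show (i + (3)) + 1 = (i + (4)) by ring, show (i + (3)) + 2 = (i + (5)) by ring] at h
    exact fun hc => h ⟨(eqB (hx _) (hx _)).mpr hc.1, (eqB (hx _) (hx _)).mpr hc.2⟩
  have H04 : ¬((toB (x (i + (4)))) = (toB (x (i + (5)))) ∧ (toB (x (i + (5)))) = (toB (x (i + (6))))) := by
    have h := h0 (i + (4))
    simp only [show (i + (4)) + 1 = (i + (5)) by ring, show (i + (4)) + 2 = (i + (6)) by ring] at h
    exact fun hc => h ⟨(eqB (hx _) (hx _)).mpr hc.1, (eqB (hx _) (hx _)).mpr hc.2⟩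
  have H1m4 : ¬((maj (toB (x (i + (-6)))) (toB (x (i + (-5)))) (toB (x (i + (-4)))) (toB (x (i + (-3)))) (toB (x (i + (-2))))) = (maj (toB (x (i + (-5)))) (toB (x (i + (-4)))) (toB (x (i + (-3)))) (toB (x (i + (-2)))) (toB (x (i + (-1))))) ∧ (maj (toB (x (i + (-5)))) (toB (x (i + (-4)))) (toB (x (i + (-3)))) (toB (x (i + (-2)))) (toB (x (i + (-1))))) = (maj (toB (x (i + (-4)))) (toB (x (i + (-3)))) (toB (x (i + (-2)))) (toB (x (i + (-1)))) (toB (x i)))) := by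
    have h := h1 (i + (-4))
    simp only [show (i + (-4)) + 1 = (i + (-3)) by ring, show (i + (-4)) + 2 = (i + (-2)) by ring] at h
    have h' : ¬(toB (update 2 x (i + (-4))) = toB (update 2 x (i + (-3))) ∧
        toB (update 2 x (i + (-3))) = toB (update 2 x (i + (-2)))) :=
      fun hc => h ⟨(eqB (hy _) (hy _)).mpr hc.1, (eqB (hy _) (hy _)).mpr hc.2⟩
    rw [Fm4, Fm3, Fm2] at h'
    exact h'
  have H1m3 : ¬((maj (toB (x (i + (-5)))) (toB (x (i + (-4)))) (toB (x (i + (-3)))) (toB (x (i + (-2)))) (toB (x (i + (-1))))) = (maj (toB (x (i + (-4)))) (toB (x (i + (-3)))) (toB (x (i + (-2)))) (toB (x (i + (-1)))) (toB (x i))) ∧ (maj (toB (x (i + (-4)))) (toB (x (i + (-3)))) (toB (x (i + (-2)))) (toB (x (i + (-1)))) (toB (x i))) = (maj (toB (x (i + (-3)))) (toB (x (i + (-2)))) (toB (x (i + (-1)))) (toB (x i)) (toB (x (i + (1)))))) := by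
    have h := h1 (i + (-3))
    simp only [show (i + (-3)) + 1 = (i + (-2)) by ring, show (i + (-3)) + 2 = (i + (-1)) by ring] at h
    have h' : ¬(toB (update 2 x (i + (-3))) = toB (update 2 x (i + (-2))) ∧
        toB (update 2 x (i + (-2))) = toB (update 2 x (i + (-1)))) :=
      fun hc => h ⟨(eqB (hy _) (hy _)).mpr hc.1, (eqB (hy _) (hy _)).mpr hc.2⟩
    rw [Fm3, Fm2, Fm1] at h'
    exact h'
  have H1m2 : ¬((maj (toB (x (i + (-4)))) (toB (x (i + (-3)))) (toB (x (i + (-2)))) (toB (x (i + (-1)))) (toB (x i))) = (maj (toB (x (i + (-3)))) (toB (x (i + (-2)))) (toB (x (i + (-1)))) (toB (x i)) (toB (x (i + (1))))) ∧ (maj (toB (x (i + (-3)))) (toB (x (i + (-2)))) (toB (x (i + (-1)))) (toB (x i)) (toB (x (i + (1))))) = (maj (toB (x (i + (-2)))) (toB (x (i + (-1)))) (toB (x i)) (toB (x (i + (1)))) (toB (x (i + (2)))))) := by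
    have h := h1 (i + (-2))
    simp only [show (i + (-2)) + 1 = (i + (-1)) by ring, show (i + (-2)) + 2 = i by ring] at h
    have h' : ¬(toB (update 2 x (i + (-2))) = toB (update 2 x (i + (-1))) ∧
        toB (update 2 x (i + (-1))) = toB (update 2 x i)) :=
      fun hc => h ⟨(eqB (hy _) (hy _)).mpr hc.1, (eqB (hy _) (hy _)).mpr hc.2⟩
    rw [Fm2, Fm1, F0] at h'
    exact h'
  have H1m1 : ¬((maj (toB (x (i + (-3)))) (toB (x (i + (-2)))) (toB (x (i + (-1)))) (toB (x i)) (toB (x (i + (1))))) = (maj (toB (x (i + (-2)))) (toB (x (i + (-1)))) (toB (x i)) (toB (x (i + (1)))) (toB (x (i + (2))))) ∧ (maj (toB (x (i + (-2)))) (toB (x (i + (-1)))) (toB (x i)) (toB (x (i + (1)))) (toB (x (i + (2))))) = (maj (toB (x (i + (-1)))) (toB (x i)) (toB (x (i + (1)))) (toB (x (i + (2)))) (toB (x (i + (3)))))) := by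
    have h := h1 (i + (-1))
    simp only [show (i + (-1)) + 1 = i by ring, show (i + (-1)) + 2 = (i + (1)) by ring] at h
    have h' : ¬(toB (update 2 x (i + (-1))) = toB (update 2 x i) ∧
        toB (update 2 x i) = toB (update 2 x (i + (1)))) :=
      fun hc => h ⟨(eqB (hy _) (hy _)).mpr hc.1, (eqB (hy _) (hy _)).mpr hc.2⟩
    rw [Fm1, F0, F1] at h'
    exact h'
  have H10 : ¬((maj (toB (x (i + (-2)))) (toB (x (i + (-1)))) (toB (x i)) (toB (x (i + (1)))) (toB (x (i + (2))))) = (maj (toB (x (i + (-1)))) (toB (x i)) (toB (x (i + (1)))) (toB (x (i + (2)))) (toB (x (i + (3))))) ∧ (maj (toB (x (i + (-1)))) (toB (x i)) (toB (x (i + (1)))) (toB (x (i + (2)))) (toB (x (i + (3))))) = (maj (toB (x i)) (toB (x (i + (1)))) (toB (x (i + (2)))) (toB (x (i + (3)))) (toB (x (i + (4)))))) := by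
    have h := h1 i
    have h' : ¬(toB (update 2 x i) = toB (update 2 x (i + (1))) ∧
        toB (update 2 x (i + (1))) = toB (update 2 x (i + (2)))) :=
      fun hc => h ⟨(eqB (hy _) (hy _)).mpr hc.1, (eqB (hy _) (hy _)).mpr hc.2⟩
    rw [F0, F1, F2] at h'
    exact h'
  have H11 : ¬((maj (toB (x (i + (-1)))) (toB (x i)) (toB (x (i + (1)))) (toB (x (i + (2)))) (toB (x (i + (3))))) = (maj (toB (x i)) (toB (x (i + (1)))) (toB (x (i + (2)))) (toB (x (i + (3)))) (toB (x (i + (4))))) ∧ (maj (toB (x i)) (toB (x (i + (1)))) (toB (x (i + (2)))) (toB (x (i + (3)))) (toB (x (i + (4))))) = (maj (toB (x (i + (1)))) (toB (x (i + (2)))) (toB (x (i + (3)))) (toB (x (i + (4)))) (toB (x (i + (5)))))) := by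
    have h := h1 (i + (1))
    simp only [show (i + (1)) + 1 = (i + (2)) by ring, show (i + (1)) + 2 = (i + (3)) by ring] at h
    have h' : ¬(toB (update 2 x (i + (1))) = toB (update 2 x (i + (2))) ∧
        toB (update 2 x (i + (2))) = toB (update 2 x (i + (3)))) :=
      fun hc => h ⟨(eqB (hy _) (hy _)).mpr hc.1, (eqB (hy _) (hy _)).mpr hc.2⟩
    rw [F1, F2, F3] at h'
    exact h'
  have H12 : ¬((maj (toB (x i)) (toB (x (i + (1)))) (toB (x (i + (2)))) (toB (x (i + (3)))) (toB (x (i + (4))))) = (maj (toB (x (i + (1)))) (toB (x (i + (2)))) (toB (x (i + (3)))) (toB (x (i + (4)))) (toB (x (i + (5))))) ∧ (maj (toB (x (i + (1)))) (toB (x (i + (2)))) (toB (x (i + (3)))) (toB (x (i + (4)))) (toB (x (i + (5))))) = (maj (toB (x (i + (2)))) (toB (x (i + (3)))) (toB (x (i + (4)))) (toB (x (i + (5)))) (toB (x (i + (6)))))) := by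
    have h := h1 (i + (2))
    simp only [show (i + (2)) + 1 = (i + (3)) by ring, show (i + (2)) + 2 = (i + (4)) by ring] at h
    have h' : ¬(toB (update 2 x (i + (2))) = toB (update 2 x (i + (3))) ∧
        toB (update 2 x (i + (3))) = toB (update 2 x (i + (4)))) :=
      fun hc => h ⟨(eqB (hy _) (hy _)).mpr hc.1, (eqB (hy _) (hy _)).mpr hc.2⟩
    rw [F2, F3, F4] at h'
    exact h'
  have H2m2 : ¬((maj (maj (toB (x (i + (-6)))) (toB (x (i + (-5)))) (toB (x (i + (-4)))) (toB (x (i + (-3)))) (toB (x (i + (-2))))) (maj (toB (x (i + (-5)))) (toB (x (i + (-4)))) (toB (x (i + (-3)))) (toB (x (i + (-2)))) (toB (x (i + (-1))))) (maj (toB (x (i + (-4)))) (toB (x (i + (-3)))) (toB (x (i + (-2)))) (toB (x (i + (-1)))) (toB (x i))) (maj (toB (x (i + (-3)))) (toB (x (i + (-2)))) (toB (x (i + (-1)))) (toB (x i)) (toB (x (i + (1))))) (maj (toB (x (i + (-2)))) (toB (x (i + (-1)))) (toB (x i)) (toB (x (i + (1)))) (toB (x (i + (2)))))) = (maj (maj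 (toB (x (i + (-5)))) (toB (x (i + (-4)))) (toB (x (i + (-3)))) (toB (x (i + (-2)))) (toB (x (i + (-1))))) (maj (toB (x (i + (-4)))) (toB (x (i + (-3)))) (toB (x (i + (-2)))) (toB (x (i + (-1)))) (toB (x i))) (maj (toB (x (i + (-3)))) (toB (x (i + (-2)))) (toB (x (i + (-1)))) (toB (x i)) (toB (x (i + (1))))) (maj (toB (x (i + (-2)))) (toB (x (i + (-1)))) (toB (x i)) (toB (x (i + (1)))) (toB (x (i + (2))))) (maj (toB (x (i + (-1)))) (toB (x i)) (toB (x (i + (1)))) (toB (x (i + (2)))) (toB (x (i + (3)))))) ∧ (maj (maj (toB (x (i + (-5)))) (toB (x (i + (-4)))) (toB (x (i + (-3)))) (toB (x (i + (-2)))) (toB (x (i + (-1))))) (maj (toB (x (i + (-4)))) (toB (x (i + (-3)))) (toB (x (i + (-2)))) (toB (x (i + (-1)))) (toB (x i))) (maj (toB (x (i + (-3)))) (toB (x (i + (-2)))) (toB (x (i + (-1)))) (toB (x i)) (toB (x (i + (1))))) (maj (toB (x (i + (-2)))) (toB (x (i + (-1)))) (toB (x i)) (toB (x (i + (1)))) (toB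 (x (i + (2))))) (maj (toB (x (i + (-1)))) (toB (x i)) (toB (x (i + (1)))) (toB (x (i + (2)))) (toB (x (i + (3)))))) = (maj (maj (toB (x (i + (-4)))) (toB (x (i + (-3)))) (toB (x (i + (-2)))) (toB (x (i + (-1)))) (toB (x i))) (maj (toB (x (i + (-3)))) (toB (x (i + (-2)))) (toB (x (i + (-1)))) (toB (x i)) (toB (x (i + (1))))) (maj (toB (x (i + (-2)))) (toB (x (i + (-1)))) (toB (x i)) (toB (x (i + (1)))) (toB (x (i + (2))))) (maj (toB (x (i + (-1)))) (toB (x i)) (toB (x (i + (1)))) (toB (x (i + (2)))) (toB (x (i + (3))))) (maj (toB (x i)) (toB (x (i + (1)))) (toB (x (i + (2)))) (toB (x (i + (3)))) (toB (x (i + (4))))))) := by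
    have h := h2 (i + (-2))
    simp only [show (i + (-2)) + 1 = (i + (-1)) by ring, show (i + (-2)) + 2 = i by ring] at h
    have h' : ¬(toB (update 2 (update 2 x) (i + (-2))) = toB (update 2 (update 2 x) (i + (-1))) ∧
        toB (update 2 (update 2 x) (i + (-1))) = toB (update 2 (update 2 x) i)) :=
      fun hc => h ⟨(eqB (hz _) (hz _)).mpr hc.1, (eqB (hz _) (hz _)).mpr hc.2⟩
    rw [Gm2, Gm1, G0] at h'
    exact h'
  have H2m1 : ¬((maj (maj (toB (x (i + (-5)))) (toB (x (i + (-4)))) (toB (x (i + (-3)))) (toB (x (i + (-2)))) (toB (x (i + (-1))))) (maj (toB (x (i + (-4)))) (toB (x (i + (-3)))) (toB (x (i + (-2)))) (toB (x (i + (-1)))) (toB (x i))) (maj (toB (x (i + (-3)))) (toB (x (i + (-2)))) (toB (x (i + (-1)))) (toB (x i)) (toB (x (i + (1))))) (maj (toB (x (i + (-2)))) (toB (x (i + (-1)))) (toB (x i)) (toB (x (i + (1)))) (toB (x (i + (2))))) (maj (toB (x (i + (-1)))) (toB (x i)) (toB (x (i + (1)))) (toB (x (i + (2)))) (toB (x (i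 + (3)))))) = (maj (maj (toB (x (i + (-4)))) (toB (x (i + (-3)))) (toB (x (i + (-2)))) (toB (x (i + (-1)))) (toB (x i))) (maj (toB (x (i + (-3)))) (toB (x (i + (-2)))) (toB (x (i + (-1)))) (toB (x i)) (toB (x (i + (1))))) (maj (toB (x (i + (-2)))) (toB (x (i + (-1)))) (toB (x i)) (toB (x (i + (1)))) (toB (x (i + (2))))) (maj (toB (x (i + (-1)))) (toB (x i)) (toB (x (i + (1)))) (toB (x (i + (2)))) (toB (x (i + (3))))) (maj (toB (x i)) (toB (x (i + (1)))) (toB (x (i + (2)))) (toB (x (i + (3)))) (toB (x (i + (4)))))) ∧ (maj (maj (toB (x (i + (-4)))) (toB (x (i + (-3)))) (toB (x (i + (-2)))) (toB (x (i + (-1)))) (toB (x i))) (maj (toB (x (i + (-3)))) (toB (x (i + (-2)))) (toB (x (i + (-1)))) (toB (x i)) (toB (x (i + (1))))) (maj (toB (x (i + (-2)))) (toB (x (i + (-1)))) (toB (x i)) (toB (x (i + (1)))) (toB (x (i + (2))))) (maj (toB (x (i + (-1)))) (toB (x i)) (toB (x (i + (1)))) (toB (x (i + (2)))) (toB (x (i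 + (3))))) (maj (toB (x i)) (toB (x (i + (1)))) (toB (x (i + (2)))) (toB (x (i + (3)))) (toB (x (i + (4)))))) = (maj (maj (toB (x (i + (-3)))) (toB (x (i + (-2)))) (toB (x (i + (-1)))) (toB (x i)) (toB (x (i + (1))))) (maj (toB (x (i + (-2)))) (toB (x (i + (-1)))) (toB (x i)) (toB (x (i + (1)))) (toB (x (i + (2))))) (maj (toB (x (i + (-1)))) (toB (x i)) (toB (x (i + (1)))) (toB (x (i + (2)))) (toB (x (i + (3))))) (maj (toB (x i)) (toB (x (i + (1)))) (toB (x (i + (2)))) (toB (x (i + (3)))) (toB (x (i + (4))))) (maj (toB (x (i + (1)))) (toB (x (i + (2)))) (toB (x (i + (3)))) (toB (x (i + (4)))) (toB (x (i + (5))))))) := by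
    have h := h2 (i + (-1))
    simp only [show (i + (-1)) + 1 = i by ring, show (i + (-1)) + 2 = (i + (1)) by ring] at h
    have h' : ¬(toB (update 2 (update 2 x) (i + (-1))) = toB (update 2 (update 2 x) i) ∧
        toB (update 2 (update 2 x) i) = toB (update 2 (update 2 x) (i + (1)))) :=
      fun hc => h ⟨(eqB (hz _) (hz _)).mpr hc.1, (eqB (hz _) (hz _)).mpr hc.2⟩
    rw [Gm1, G0, G1] at h'
    exact h'
  have H20 : ¬((maj (maj (toB (x (i + (-4)))) (toB (x (i + (-3)))) (toB (x (i + (-2)))) (toB (x (i + (-1)))) (toB (x i))) (maj (toB (x (i + (-3)))) (toB (x (i + (-2)))) (toB (x (i + (-1)))) (toB (x i)) (toB (x (i + (1))))) (maj (toB (x (i + (-2)))) (toB (x (i + (-1)))) (toB (x i)) (toB (x (i + (1)))) (toB (x (i + (2))))) (maj (toB (x (i + (-1)))) (toB (x i)) (toB (x (i + (1)))) (toB (x (i + (2)))) (toB (x (i + (3))))) (maj (toB (x i)) (toB (x (i + (1)))) (toB (x (i + (2)))) (toB (x (i + (3)))) (toB (x (i + (4)))))) = (maj (maj (toB (x (i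 + (-3)))) (toB (x (i + (-2)))) (toB (x (i + (-1)))) (toB (x i)) (toB (x (i + (1))))) (maj (toB (x (i + (-2)))) (toB (x (i + (-1)))) (toB (x i)) (toB (x (i + (1)))) (toB (x (i + (2))))) (maj (toB (x (i + (-1)))) (toB (x i)) (toB (x (i + (1)))) (toB (x (i + (2)))) (toB (x (i + (3))))) (maj (toB (x i)) (toB (x (i + (1)))) (toB (x (i + (2)))) (toB (x (i + (3)))) (toB (x (i + (4))))) (maj (toB (x (i + (1)))) (toB (x (i + (2)))) (toB (x (i + (3)))) (toB (x (i + (4)))) (toB (x (i + (5)))))) ∧ (maj (maj (toB (x (i + (-3)))) (toB (x (i + (-2)))) (toB (x (i + (-1)))) (toB (x i)) (toB (x (i + (1))))) (maj (toB (x (i + (-2)))) (toB (x (i + (-1)))) (toB (x i)) (toB (x (i + (1)))) (toB (x (i + (2))))) (maj (toB (x (i + (-1)))) (toB (x i)) (toB (x (i + (1)))) (toB (x (i + (2)))) (toB (x (i + (3))))) (maj (toB (x i)) (toB (x (i + (1)))) (toB (x (i + (2)))) (toB (x (i + (3)))) (toB (x (i + (4))))) (maj (toB (x (i + (1)))) (toB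 (x (i + (2)))) (toB (x (i + (3)))) (toB (x (i + (4)))) (toB (x (i + (5)))))) = (maj (maj (toB (x (i + (-2)))) (toB (x (i + (-1)))) (toB (x i)) (toB (x (i + (1)))) (toB (x (i + (2))))) (maj (toB (x (i + (-1)))) (toB (x i)) (toB (x (i + (1)))) (toB (x (i + (2)))) (toB (x (i + (3))))) (maj (toB (x i)) (toB (x (i + (1)))) (toB (x (i + (2)))) (toB (x (i + (3)))) (toB (x (i + (4))))) (maj (toB (x (i + (1)))) (toB (x (i + (2)))) (toB (x (i + (3)))) (toB (x (i + (4)))) (toB (x (i + (5))))) (maj (toB (x (i + (2)))) (toB (x (i + (3)))) (toB (x (i + (4)))) (toB (x (i + (5)))) (toB (x (i + (6))))))) := by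
    have h := h2 i
    have h' : ¬(toB (update 2 (update 2 x) i) = toB (update 2 (update 2 x) (i + (1))) ∧
        toB (update 2 (update 2 x) (i + (1))) = toB (update 2 (update 2 x) (i + (2)))) :=
      fun hc => h ⟨(eqB (hz _) (hz _)).mpr hc.1, (eqB (hz _) (hz _)).mpr hc.2⟩
    rw [G0, G1, G2] at h'
    exact h'
  rw [eqB (hz i) (hx i), G0]
  exact master (toB (x (i + (-6)))) (toB (x (i + (-5)))) (toB (x (i + (-4)))) (toB (x (i + (-3)))) (toB (x (i + (-2)))) (toB (x (i + (-1)))) (toB (x i)) (toB (x (i + (1)))) (toB (x (i + (2)))) (toB (x (i + (3)))) (toB (x (i + (4)))) (toB (x (i + (5)))) (toB (x (i + (6)))) ⟨H0m6, H0m5, H0m4, H0m3, H0m2, H0m1, H00, H01, H02, H03, H04, H1m4, H1m3, H1m2, H1m1, H10, H11, H12, H2m2, H2m1, H20⟩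
lemma upd_pos {c : ℤ → ℤ} {j : ℤ} (h : 0 < nbhdSum 2 c j) : update 2 c j = 1 := by
  unfold update; rw [if_pos h]

lemma upd_neg {c : ℤ → ℤ} {j : ℤ} (h : nbhdSum 2 c j < 0) : update 2 c j = -1 := by
  unfold update; rw [if_neg (by omega), if_pos h]

lemma frozen_step (c : ℤ → ℤ) (hc : ∀ j, c j = 1 ∨ c j = -1) (a v : ℤ)
    (h1 : c a = v) (h2 : c (a+1) = v) (h3 : c (a+2) = v) :
    update 2 c a = v ∧ update 2 c (a+1) = v ∧ update 2 c (a+2) = v := by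
  have hv : v = 1 ∨ v = -1 := h1 ▸ hc a
  have n1 := hc (a-2); have n2 := hc (a-1); have n3 := hc (a+3); have n4 := hc (a+4)
  rcases hv with rfl | rfl
  · refine ⟨upd_pos ?_, upd_pos ?_, upd_pos ?_⟩
    · rw [sum5 c a, h1, h2, h3]; omega
    · rw [sum5 c (a+1),
        show a+1-2 = a-1 by ring, show a+1-1 = a by ring,
        show a+1+1 = a+2 by ring, show a+1+2 = a+3 by ring, h1, h2, h3]; omega
    · rw [sum5 c (a+2),
        show a+2-2 = a by ring, show a+2-1 = a+1 by ring,
        show a+2+1 = a+3 by ring, show a+2+2 = a+4 by ring, h1, h2, h3]; omega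
  · refine ⟨upd_neg ?_, upd_neg ?_, upd_neg ?_⟩
    · rw [sum5 c a, h1, h2, h3]; omega
    · rw [sum5 c (a+1),
        show a+1-2 = a-1 by ring, show a+1-1 = a by ring,
        show a+1+1 = a+2 by ring, show a+1+2 = a+3 by ring, h1, h2, h3]; omega
    · rw [sum5 c (a+2),
        show a+2-2 = a by ring, show a+2-1 = a+1 by ring,
        show a+2+1 = a+3 by ring, show a+2+2 = a+4 by ring, h1, h2, h3]; omega

lemma advance_right (c : ℤ → ℤ) (hc : ∀ j, c j = 1 ∨ c j = -1) (a v : ℤ)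
    (h1 : c a = v) (h2 : c (a+1) = v) (h3 : c (a+2) = v) :
    (c (a+3) = -v ∧ c (a+4) = -v ∧ c (a+5) = -v) ∨ update 2 c (a+3) = v := by
  by_cases hb : c (a+3) = -v ∧ c (a+4) = -v ∧ c (a+5) = -v
  · exact Or.inl hb
  · right
    have hv : v = 1 ∨ v = -1 := h1 ▸ hc a
    have n1 := hc (a+3); have n2 := hc (a+4); have n3 := hc (a+5)
    have e : nbhdSum 2 c (a+3) = c (a+1) + c (a+2) + c (a+3) + c (a+4) + c (a+5) := by
      rw [sum5 c (a+3), show a+3-2 = a+1 by ring, show a+3-1 = a+2 by ring,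
        show a+3+1 = a+4 by ring, show a+3+2 = a+5 by ring]
    rcases hv with rfl | rfl
    · exact upd_pos (by rw [e, h2, h3]; omega)
    · exact upd_neg (by rw [e, h2, h3]; omega)

lemma advance_left (c : ℤ → ℤ) (hc : ∀ j, c j = 1 ∨ c j = -1) (a v : ℤ)
    (h1 : c a = v) (h2 : c (a+1) = v) (h3 : c (a+2) = v) :
    (c (a-3) = -v ∧ c (a-2) = -v ∧ c (a-1) = -v) ∨ update 2 c (a-1) = v := by
  by_cases hb : c (a-3) = -v ∧ c (a-2) = -v ∧ c (a-1) = -v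
  · exact Or.inl hb
  · right
    have hv : v = 1 ∨ v = -1 := h1 ▸ hc a
    have n1 := hc (a-3); have n2 := hc (a-2); have n3 := hc (a-1)
    have e : nbhdSum 2 c (a-1) = c (a-3) + c (a-2) + c (a-1) + c a + c (a+1) := by
      rw [sum5 c (a-1), show a-1-2 = a-3 by ring, show a-1-1 = a-2 by ring,
        show a-1+1 = a by ring, show a-1+2 = a+1 by ring]
    rcases hv with rfl | rfl
    · exact upd_pos (by rw [e, h1, h2]; omega)
    · exact upd_neg (by rw [e, h1, h2]; omega)

lemma wall_persist (c : ℤ → ℤ) (hc : ∀ j, c j = 1 ∨ c j = -1) (a v : ℤ)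
    (h1 : c a = v) (h2 : c (a+1) = v) (h3 : c (a+2) = v) :
    ∀ n : ℕ, (update 2)^[n] c a = v ∧ (update 2)^[n] c (a+1) = v ∧ (update 2)^[n] c (a+2) = v := by
  intro n
  induction n with
  | zero => exact ⟨h1, h2, h3⟩
  | succ n ih =>
    rw [Function.iterate_succ_apply']
    exact frozen_step _ (pm_iter c hc n) a v ih.1 ih.2.1 ih.2.2
lemma reach_left (s : ℤ → ℤ) (hs : ∀ j, s j = 1 ∨ s j = -1) (i : ℤ) :
    ∀ d : ℕ, ∀ t : ℕ, ∀ a : ℤ,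
      (update 2)^[t] s a = (update 2)^[t] s (a+1) →
      (update 2)^[t] s (a+1) = (update 2)^[t] s (a+2) →
      a + 2 + (d:ℤ) = i →
      ∃ T c, ∀ u : ℕ, T ≤ u → (update 2)^[u] s i = c := by
  intro d
  induction d using Nat.strong_induction_on with
  | _ d ih =>
  intro t a h1 h2 hd
  set x := (update 2)^[t] s with hxdef
  have hpm : ∀ j, x j = 1 ∨ x j = -1 := pm_iter s hs t
  have hv1 : x (a+1) = x a := h1.symm
  have hv2 : x (a+2) = x a := by rw [← h2, h1]
  rcases Nat.eq_zero_or_pos d with hd0 | hdpos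
  · subst hd0
    have hi : i = a + 2 := by omega
    refine ⟨t, x a, fun u hu => ?_⟩
    obtain ⟨n, rfl⟩ : ∃ n, u = n + t := ⟨u - t, by omega⟩
    rw [Function.iterate_add_apply, hi]
    exact (wall_persist x hpm a (x a) rfl hv1 hv2 n).2.2
  · rcases advance_right x hpm a (x a) rfl hv1 hv2 with hb | hadv
    · by_cases hd3 : 3 ≤ d
      · refine ih (d-3) (by omega) t (a+3) ?_ ?_ (by omega)
        · rw [← hxdef, show a+3+1 = a+4 by ring, hb.1, hb.2.1]
        · rw [← hxdef, show a+3+1 = a+4 by ring, show a+3+2 = a+5 by ring, hb.2.1, hb.2.2]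
      · have hi : i = a + 3 ∨ i = a + 4 := by omega
        refine ⟨t, -(x a), fun u hu => ?_⟩
        obtain ⟨n, rfl⟩ : ∃ n, u = n + t := ⟨u - t, by omega⟩
        rw [Function.iterate_add_apply]
        have w := wall_persist x hpm (a+3) (-(x a)) hb.1
          (by rw [show a+3+1 = a+4 by ring]; exact hb.2.1)
          (by rw [show a+3+2 = a+5 by ring]; exact hb.2.2) n
        rcases hi with h | h
        · rw [h]; exact w.1
        · rw [h, show a+4 = a+3+1 by ring]; exact w.2.1
    · have hf := frozen_step x hpm a (x a) rfl hv1 hv2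
      have st : (update 2)^[t+1] s = update 2 x := by rw [Function.iterate_succ_apply']
      refine ih (d-1) (by omega) (t+1) (a+1) ?_ ?_ (by omega)
      · rw [st, show a+1+1 = a+2 by ring, hf.2.1, hf.2.2]
      · rw [st, show a+1+1 = a+2 by ring, show a+1+2 = a+3 by ring, hf.2.2, hadv]

lemma reach_right (s : ℤ → ℤ) (hs : ∀ j, s j = 1 ∨ s j = -1) (i : ℤ) :
    ∀ d : ℕ, ∀ t : ℕ, ∀ a : ℤ,
      (update 2)^[t] s a = (update 2)^[t] s (a+1) →
      (update 2)^[t] s (a+1) = (update 2)^[t] s (a+2) →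
      i + (d:ℤ) = a →
      ∃ T c, ∀ u : ℕ, T ≤ u → (update 2)^[u] s i = c := by
  intro d
  induction d using Nat.strong_induction_on with
  | _ d ih =>
  intro t a h1 h2 hd
  set x := (update 2)^[t] s with hxdef
  have hpm : ∀ j, x j = 1 ∨ x j = -1 := pm_iter s hs t
  have hv1 : x (a+1) = x a := h1.symm
  have hv2 : x (a+2) = x a := by rw [← h2, h1]
  rcases Nat.eq_zero_or_pos d with hd0 | hdpos
  · subst hd0
    have hi : i = a := by omega
    refine ⟨t, x a, fun u hu => ?_⟩
    obtain ⟨n, rfl⟩ : ∃ n, u = n + t := ⟨u - t, by omega⟩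
    rw [Function.iterate_add_apply, hi]
    exact (wall_persist x hpm a (x a) rfl hv1 hv2 n).1
  · rcases advance_left x hpm a (x a) rfl hv1 hv2 with hb | hadv
    · by_cases hd3 : 3 ≤ d
      · refine ih (d-3) (by omega) t (a-3) ?_ ?_ (by omega)
        · rw [← hxdef, show a-3+1 = a-2 by ring, hb.1, hb.2.1]
        · rw [← hxdef, show a-3+1 = a-2 by ring, show a-3+2 = a-1 by ring, hb.2.1, hb.2.2]
      · have hi : i = a - 2 ∨ i = a - 1 := by omega
        refine ⟨t, -(x a), fun u hu => ?_⟩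
        obtain ⟨n, rfl⟩ : ∃ n, u = n + t := ⟨u - t, by omega⟩
        rw [Function.iterate_add_apply]
        have w := wall_persist x hpm (a-3) (-(x a)) hb.1
          (by rw [show a-3+1 = a-2 by ring]; exact hb.2.1)
          (by rw [show a-3+2 = a-1 by ring]; exact hb.2.2) n
        rcases hi with h | h
        · rw [h, show a-2 = a-3+1 by ring]; exact w.2.1
        · rw [h, show a-1 = a-3+2 by ring]; exact w.2.2
    · have hf := frozen_step x hpm a (x a) rfl hv1 hv2
      have st : (update 2)^[t+1] s = update 2 x := by rw [Function.iterate_succ_apply']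
      refine ih (d-1) (by omega) (t+1) (a-1) ?_ ?_ (by omega)
      · rw [st, show a-1+1 = a by ring, hadv, hf.1]
      · rw [st, show a-1+1 = a by ring, show a-1+2 = a+1 by ring, hf.1, hf.2.1]

/-- Main classification theorem for `k = 2`: for an arbitrary initial
configuration of the majority-rule cellular automaton on `ℤ` with `k = 2`,
every site is eventually periodic in time with period dividing two.  In
particular the only attractors are homogeneous, steady and period-two states,
and no chaotic or complex-structure attractors occur. -/
theorem k2_attractors_eventually_period_two (s : ℤ → ℤ)
    (hs : ∀ i, s i = 1 ∨ s i = -1) :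
    ∀ i : ℤ, ∃ T : ℕ, ∀ t : ℕ, T ≤ t →
      (update 2)^[t + 2] s i = (update 2)^[t] s i := by
  intro i
  by_cases hW : ∃ t : ℕ, ∃ a : ℤ, (update 2)^[t] s a = (update 2)^[t] s (a+1) ∧
      (update 2)^[t] s (a+1) = (update 2)^[t] s (a+2)
  · obtain ⟨t, a, h1, h2⟩ := hW
    have main : ∃ T c, ∀ u : ℕ, T ≤ u → (update 2)^[u] s i = c := by
      by_cases hle : a + 2 ≤ i
      · obtain ⟨d, hd⟩ : ∃ d : ℕ, a + 2 + (d:ℤ) = i := ⟨(i - a - 2).toNat, by omega⟩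
        exact reach_left s hs i d t a h1 h2 hd
      · by_cases hge : i ≤ a
        · obtain ⟨d, hd⟩ : ∃ d : ℕ, i + (d:ℤ) = a := ⟨(a - i).toNat, by omega⟩
          exact reach_right s hs i d t a h1 h2 hd
        · have hia : i = a + 1 := by omega
          refine ⟨t, (update 2)^[t] s a, fun u hu => ?_⟩
          obtain ⟨n, rfl⟩ : ∃ n, u = n + t := ⟨u - t, by omega⟩
          rw [Function.iterate_add_apply, hia]
          exact (wall_persist _ (pm_iter s hs t) a _ rfl h1.symm (by rw [← h2, ← h1]) n).2.1
    obtain ⟨T, c, hT⟩ := main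
    exact ⟨T, fun u hu => by rw [hT (u+2) (by omega), hT u hu]⟩
  · simp only [not_exists] at hW
    refine ⟨0, fun t _ => ?_⟩
    have e2 : (update 2)^[t+2] s = update 2 (update 2 ((update 2)^[t] s)) := by
      rw [show t+2 = (t+1)+1 from rfl, Function.iterate_succ_apply', Function.iterate_succ_apply']
    rw [e2]
    refine key ((update 2)^[t] s) (pm_iter s hs t) i (hW t) ?_ ?_
    · intro a
      have h := hW (t+1) a
      rwa [Function.iterate_succ_apply'] at h
    · intro a
      have h := hW (t+2) a
      rwa [e2] at h
end
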